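/- arXiv:1708.09525 — 6 statements merged into one kernel-verified Lean document; each statement's English description precedes it below -/
import Mathlib

section
/- Let n ≥ 1 and k ≥ 1, and suppose v ∈ ℝ^n is the sum of k nonzero dominoes. Then var(v) ≤ k − 1. -/
/-- Number of sign changes in a list of real numbers (consecutive entries of
opposite sign). -/
noncomputable def signChangesList : List ℝ → ℕ
  | [] => 0
  | [_] => 0
  | a :: b :: t => (if a * b < 0 then 1 else 0) + signChangesList (b :: t)

/-- `signVar v` is the number of sign changes in the sequence `v 0, …, v (n-1)`
after deleting all zero entries. -/
noncomputable def signVar {n : ℕ} (v : Fin n → ℝ) : ℕ :=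
  signChangesList ((List.ofFn v).filter (fun x => decide (x ≠ 0)))

/-- `d` is an `i`-domino (indices written 0-based): if `i + 1 < n` then `d i` and
`d (i+1)` are nonzero with the same sign and all other entries vanish; if `i` is
the last index, then `d i ≠ 0` and all other entries vanish. -/
def IsDominoAt {n : ℕ} (i : Fin n) (d : Fin n → ℝ) : Prop :=
  if h : (i : ℕ) + 1 < n then
    0 < d i * d ⟨(i : ℕ) + 1, h⟩ ∧
      ∀ j : Fin n, (j : ℕ) ≠ (i : ℕ) → (j : ℕ) ≠ (i : ℕ) + 1 → d j = 0
  else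
    d i ≠ 0 ∧ ∀ j : Fin n, j ≠ i → d j = 0

/-- A (nonzero) domino is an `i`-domino for some index `i`. -/
def IsDomino {n : ℕ} (d : Fin n → ℝ) : Prop := ∃ i : Fin n, IsDominoAt i d

lemma domino_close {n : ℕ} {e : Fin n → ℝ} (he : IsDomino e) {a b : Fin n}
    (ha : e a ≠ 0) (hb : e b ≠ 0) : 0 < e a * e b ∧ (b : ℕ) ≤ (a : ℕ) + 1 := by
  obtain ⟨i, hi⟩ := he
  unfold IsDominoAt at hi
  split_ifs at hi with h
  · obtain ⟨hpos, hz⟩ := hi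
    have ha' : a = i ∨ a = ⟨(i : ℕ) + 1, h⟩ := by
      by_contra hc
      push_neg at hc
      exact ha (hz a (fun hh => hc.1 (Fin.ext hh)) (fun hh => hc.2 (Fin.ext hh)))
    have hb' : b = i ∨ b = ⟨(i : ℕ) + 1, h⟩ := by
      by_contra hc
      push_neg at hc
      exact hb (hz b (fun hh => hc.1 (Fin.ext hh)) (fun hh => hc.2 (Fin.ext hh)))
    have hii : 0 < e i * e ⟨(i : ℕ) + 1, h⟩ := hpos
    rcases ha' with rfl | rfl <;> rcases hb' with rfl | rfl
    · exact ⟨mul_self_pos.mpr ha, Nat.le_succ _⟩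
    · exact ⟨hii, by simp⟩
    · exact ⟨by rw [mul_comm]; exact hii, by simp; omega⟩
    · exact ⟨mul_self_pos.mpr ha, Nat.le_succ _⟩
  · obtain ⟨hne, hz⟩ := hi
    have ha' : a = i := by by_contra hc; exact ha (hz a hc)
    have hb' : b = i := by by_contra hc; exact hb (hz b hc)
    subst ha' ; rw [hb']
    exact ⟨mul_self_pos.mpr ha, Nat.le_succ _⟩

lemma exists_pos_term {n k : ℕ} (d : Fin k → Fin n → ℝ) (v : Fin n → ℝ)
    (hv : ∀ j, v j = ∑ i, d i j) (p : Fin n) (hvp : v p ≠ 0) :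
    ∃ i, 0 < d i p * v p := by
  by_contra hcon
  push_neg at hcon
  have h1 : (∑ i, d i p * v p) ≤ 0 := Finset.sum_nonpos fun i _ => hcon i
  rw [← Finset.sum_mul, ← hv p] at h1
  nlinarith [mul_self_pos.mpr hvp]

lemma key_lemma {n k : ℕ} (d : Fin k → Fin n → ℝ) (hd : ∀ i, IsDomino (d i))
    (v : Fin n → ℝ) (hv : ∀ j, v j = ∑ i, d i j) :
    ∀ (rest : List (Fin n)) (p : Fin n), (p :: rest).Pairwise (· < ·) →
      (∀ r ∈ p :: rest, v r ≠ 0) →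
      signChangesList ((p :: rest).map v) <
        (Finset.univ.filter
          (fun i => ∃ r ∈ p :: rest, d i r ≠ 0 ∧ (r = p → 0 < d i r * v r))).card := by
  intro rest
  induction rest with
  | nil =>
    intro p _ hnz
    obtain ⟨i₀, hi₀⟩ := exists_pos_term d v hv p (hnz p (by simp))
    have : i₀ ∈ Finset.univ.filter
        (fun i => ∃ r ∈ [p], d i r ≠ 0 ∧ (r = p → 0 < d i r * v r)) := by
      simp only [Finset.mem_filter, Finset.mem_univ, true_and, List.mem_singleton]
      exact ⟨p, rfl, fun hz => by rw [hz] at hi₀; simp at hi₀, fun _ => hi₀⟩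
    have hcard : 0 < (Finset.univ.filter
        (fun i => ∃ r ∈ [p], d i r ≠ 0 ∧ (r = p → 0 < d i r * v r))).card :=
      Finset.card_pos.mpr ⟨i₀, this⟩
    simpa [signChangesList] using hcard
  | cons q t ih =>
    intro p hpair hnz
    have hpq : p < q := (List.pairwise_cons.mp hpair).1 q (by simp)
    have hplt : ∀ r ∈ q :: t, p < r := (List.pairwise_cons.mp hpair).1
    have hpair' : (q :: t).Pairwise (· < ·) := (List.pairwise_cons.mp hpair).2
    have hnz' : ∀ r ∈ q :: t, v r ≠ 0 := fun r hr => hnz r (List.mem_cons_of_mem p hr)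
    have IH := ih q hpair' hnz'
    set S' := Finset.univ.filter
      (fun i => ∃ r ∈ q :: t, d i r ≠ 0 ∧ (r = q → 0 < d i r * v r)) with hS'
    set S := Finset.univ.filter
      (fun i => ∃ r ∈ p :: q :: t, d i r ≠ 0 ∧ (r = p → 0 < d i r * v r)) with hS
    have hsub : S' ⊆ S := by
      intro i hi
      simp only [hS', hS, Finset.mem_filter, Finset.mem_univ, true_and] at hi ⊢
      obtain ⟨r, hr, hdr, _⟩ := hi
      exact ⟨r, List.mem_cons_of_mem p hr, hdr,
        fun hrp => absurd (hrp ▸ hplt r hr) (lt_irrefl p)⟩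
    have hstep : signChangesList ((p :: q :: t).map v)
        = (if v p * v q < 0 then 1 else 0) + signChangesList ((q :: t).map v) := by
      simp [signChangesList]
    by_cases hsc : v p * v q < 0
    · obtain ⟨i₀, hi₀⟩ := exists_pos_term d v hv p (hnz p (by simp))
      have hdp : d i₀ p ≠ 0 := fun hz => by rw [hz] at hi₀; simp at hi₀
      have hmem : i₀ ∈ S := by
        simp only [hS, Finset.mem_filter, Finset.mem_univ, true_and]
        exact ⟨p, by simp, hdp, fun _ => hi₀⟩
      have hnot : i₀ ∉ S' := by
        intro hcon
        simp only [hS', Finset.mem_filter, Finset.mem_univ, true_and] at hcon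
        obtain ⟨r, hr, hdr, hcond⟩ := hcon
        have hclose := domino_close (hd i₀) hdp hdr
        have hqr : q ≤ r := by
          rcases List.mem_cons.mp hr with rfl | hr'
          · exact le_refl _
          · exact le_of_lt ((List.pairwise_cons.mp hpair').1 r hr')
        have hrq : r = q := by
          have h1 : (r : ℕ) ≤ (p : ℕ) + 1 := hclose.2
          have h2 : (p : ℕ) < (q : ℕ) := hpq
          have h3 : (q : ℕ) ≤ (r : ℕ) := hqr
          exact Fin.ext (by omega)
        have hpos := hcond hrq
        rw [hrq] at hclose hpos
        nlinarith [hclose.1, hi₀, hpos, hsc]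
      have hss : S' ⊂ S := Finset.ssubset_iff_of_subset hsub |>.mpr ⟨i₀, hmem, hnot⟩
      have hcard : S'.card < S.card := Finset.card_lt_card hss
      rw [hstep, if_pos hsc]
      omega
    · have hcard : S'.card ≤ S.card := Finset.card_le_card hsub
      rw [hstep, if_neg hsc]
      omega

/-- If `v ∈ ℝ^n` is the sum of `k ≥ 1` nonzero dominoes, then `var(v) ≤ k - 1`. -/
theorem signVar_le_of_sum_dominoes (n k : ℕ) (hn : 1 ≤ n) (hk : 1 ≤ k)
    (d : Fin k → Fin n → ℝ) (hd : ∀ i, IsDomino (d i))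
    (v : Fin n → ℝ) (hv : v = ∑ i, d i) :
    signVar v ≤ k - 1 := by
  have hv' : ∀ j, v j = ∑ i, d i j := by
    intro j; rw [hv]; simp [Finset.sum_apply]
  have hfil : (List.ofFn v).filter (fun x => decide (x ≠ 0))
      = ((List.finRange n).filter (fun j => decide (v j ≠ 0))).map v := by
    rw [List.ofFn_eq_map, List.filter_map]; rfl
  rw [signVar, hfil]
  have hpairP : ((List.finRange n).filter (fun j => decide (v j ≠ 0))).Pairwise (· < ·) :=
    (List.pairwise_lt_finRange n).filter _
  have hnzP : ∀ r ∈ (List.finRange n).filter (fun j => decide (v j ≠ 0)), v r ≠ 0 := by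
    intro r hr
    simpa using (List.of_mem_filter hr)
  rcases heq : (List.finRange n).filter (fun j => decide (v j ≠ 0)) with _ | ⟨p, rest⟩
  · simp [signChangesList]
  · rw [heq] at hpairP hnzP
    have hkey := key_lemma d hd v hv' rest p hpairP hnzP
    have hle : (Finset.univ.filter
        (fun i => ∃ r ∈ p :: rest, d i r ≠ 0 ∧ (r = p → 0 < d i r * v r))).card ≤ k :=
      le_trans (Finset.card_filter_le _ _) (by simp)
    omega
end

section
/- Let n ≥ 5 and let Z be a totally positive 5×n real matrix. Suppose v ∈ ℝ^n is such that for some integers i, j with 1 ≤ i, i + 1 < j, and j ≤ n − 2, the coordinates v_i, v_{i+1}, v_j, v_{j+1}, v_n are all positive and all other coordinates of v are zero; suppose v′ ∈ ℝ^n has the same form for some integers i′, j′ with 1 ≤ i′, i′ + 1 < j′ ≤ n − 2. If Zv and Zv′ span the same line in ℝ^5, then v and v′ span the same line in ℝ^n. -/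
/-!
For a strictly increasing `Q : Fin 4 → Fin n`, the twistor coordinate
`x ↦ det [x, Z_{Q 0}, …, Z_{Q 3}]` is linear, vanishes on the columns `Z_{Q k}`, and on any
other column `Z_l` has the sign `(-1) ^ #{k | Q k < l}`: moving `Z_l` to its sorted position
turns the determinant into a positive maximal minor. Hence it has a definite sign on `Z u` for
`u ≥ 0` whenever that count has one parity on the support of `u` off `Q`.

With `Q = (0, 1, 2, 3)` the coordinate is positive on `Z v` for every BCFW vector `v`, so
`Z v' = c • Z v` forces `c > 0`. If `i < i'`, take `Q = (i+1, j, j+1, n-1)`: off `Q`, the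
support of `v` is `{i}`, with count 0, while the support of `v'` lies right of `i`, where every
position outside `Q` has count 1 or 3. If `i = i'` and `j < j'`, `Q = (i, i+1, j+1, n-1)` works
the same way. The coordinate is then positive on `Z v` and nonpositive on `Z v'`, contradicting
`c > 0`. If the cells agree, `v' - c • v` is a kernel vector supported on five columns, whose
minor is nonzero.
-/

/-- All maximal (`a × a`) minors of the `a × n` matrix `Z` are positive. -/
def MinorsPos {a n : ℕ} (Z : Matrix (Fin a) (Fin n) ℝ) : Prop :=
  ∀ f : Fin a → Fin n, StrictMono f → 0 < (Z.submatrix id f).det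

/-- The vector `v ∈ ℝ^n` has the `(1,n)`-BCFW shape determined by the 0-based
indices `i, j` with `i + 1 < j` and `j ≤ n - 3`: its coordinates at positions
`i, i+1, j, j+1` and at the last position `n-1` are positive, and all other
coordinates vanish. (In the paper's 1-based notation, `1 ≤ i`, `i + 1 < j ≤ n - 2`,
and the positive coordinates are `v_i, v_{i+1}, v_j, v_{j+1}, v_n`.) -/
def K1BCFWShape (n : ℕ) (i j : ℕ) (v : Fin n → ℝ) : Prop :=
  i + 1 < j ∧ j + 3 ≤ n ∧
  (∀ l : Fin n, ((l : ℕ) = i ∨ (l : ℕ) = i + 1 ∨ (l : ℕ) = j ∨ (l : ℕ) = j + 1 ∨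
      (l : ℕ) = n - 1) → 0 < v l) ∧
  (∀ l : Fin n, (l : ℕ) ≠ i → (l : ℕ) ≠ i + 1 → (l : ℕ) ≠ j → (l : ℕ) ≠ j + 1 →
      (l : ℕ) ≠ n - 1 → v l = 0)

open Matrix Finset

namespace Fin

variable {m : ℕ} {α : Type*}

theorem lt_iff_lt_card_filter_lt [LinearOrder α] {Q : Fin m → α} (hQ : StrictMono Q)
    (k : Fin m) (x : α) : Q k < x ↔ (k : ℕ) < #{k' | Q k' < x} := by
  constructor
  · intro hk
    have hsub : Iic k ⊆ ({k' | Q k' < x} : Finset (Fin m)) := fun k' hk' =>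
      mem_filter.2 ⟨mem_univ _, (hQ.monotone (mem_Iic.1 hk')).trans_lt hk⟩
    simpa [Fin.card_Iic] using card_le_card hsub
  · intro hk
    by_contra hxk
    have hsub : ({k' | Q k' < x} : Finset (Fin m)) ⊆ Iio k := fun k' hk' =>
      mem_Iio.2 (lt_of_not_ge fun hkk' => hxk ((hQ.monotone hkk').trans_lt (mem_filter.1 hk').2))
    have := card_le_card hsub
    rw [Fin.card_Iio] at this
    omega

theorem strictMono_insertNth_of_lt [Preorder α] {Q : Fin m → α} (hQ : StrictMono Q)
    {p : Fin (m + 1)} {x : α} (hlt : ∀ k, k.castSucc < p → Q k < x)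
    (hgt : ∀ k, p ≤ k.castSucc → x < Q k) :
    StrictMono (p.insertNth x Q) := by
  intro a b hab
  obtain ha | ⟨a, rfl⟩ := p.eq_self_or_eq_succAbove a <;>
  obtain hb | ⟨b, rfl⟩ := p.eq_self_or_eq_succAbove b <;>
  (try subst ha) <;> (try subst hb) <;>
  simp only [insertNth_apply_same, insertNth_apply_succAbove]
  · exact absurd hab (lt_irrefl _)
  · exact hgt b ((lt_succAbove_iff_le_castSucc _ b).1 hab)
  · exact hlt a ((succAbove_lt_iff_castSucc_lt _ a).1 hab)
  · exact hQ (succAbove_lt_succAbove_iff.1 hab)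

end Fin

section Twistor

variable {m n : ℕ} (Z : Matrix (Fin (m + 1)) (Fin n) ℝ)

/-- The twistor coordinate `⟨x Z_{Q 0} ⋯ Z_{Q (m-1)}⟩` of the paper. -/
def twistorCoord (Q : Fin m → Fin n) : (Fin (m + 1) → ℝ) →ₗ[ℝ] ℝ where
  toFun x := (of (vecCons x fun k => Zᵀ (Q k))).det
  map_add' x y :=
    congrArg (fun f => f fun k => Zᵀ (Q k)) (map_add detRowAlternating.curryLeft x y)
  map_smul' c x :=
    congrArg (fun f => f fun k => Zᵀ (Q k)) (map_smul detRowAlternating.curryLeft c x)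

theorem twistorCoord_mulVec (Q : Fin m → Fin n) (u : Fin n → ℝ) :
    twistorCoord Z Q (Z *ᵥ u) = ∑ l, u l * twistorCoord Z Q (Zᵀ l) := by
  simp [mulVec_eq_sum, map_sum]

theorem twistorCoord_col_of_mem_range {Q : Fin m → Fin n} {l : Fin n} (hl : l ∈ Set.range Q) :
    twistorCoord Z Q (Zᵀ l) = 0 := by
  obtain ⟨k, rfl⟩ := hl
  exact det_zero_of_row_eq (i := 0) (j := k.succ) (Fin.succ_ne_zero k).symm rfl

theorem det_submatrix_insertNth_eq_twistorCoord (Q : Fin m → Fin n) (p : Fin (m + 1)) (l : Fin n) :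
    (Z.submatrix id (p.insertNth l Q)).det = (-1) ^ (p : ℕ) * twistorCoord Z Q (Zᵀ l) := by
  have hcols : (Z.submatrix id (p.insertNth l Q))ᵀ =
      of (p.insertNth (α := fun _ => Fin (m + 1) → ℝ) (Zᵀ l) fun k => Zᵀ (Q k)) := by
    funext r
    rcases p.eq_self_or_eq_succAbove r with rfl | ⟨k, rfl⟩ <;> ext <;> simp
  have h := (detRowAlternating : (Fin (m + 1) → ℝ) [⋀^Fin (m + 1)]→ₗ[ℝ] ℝ).map_insertNth p
    (Zᵀ l) fun k => Zᵀ (Q k)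
  rw [← det_transpose, hcols]
  exact h.trans (by rw [zsmul_eq_mul]; push_cast; rfl)

variable {Z}

theorem neg_one_pow_mul_twistorCoord_col_pos (hZ : MinorsPos Z) {Q : Fin m → Fin n}
    (hQ : StrictMono Q) {l : Fin n} (hl : l ∉ Set.range Q) :
    0 < (-1) ^ #{k | Q k < l} * twistorCoord Z Q (Zᵀ l) := by
  let p : Fin (m + 1) :=
    ⟨#{k | Q k < l}, Nat.lt_succ_of_le (card_le_univ _ |>.trans_eq (Fintype.card_fin m))⟩
  have hq : StrictMono (p.insertNth l Q) := by
    refine Fin.strictMono_insertNth_of_lt hQ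
      (fun k hk => (Fin.lt_iff_lt_card_filter_lt hQ k l).2 hk)
      fun k hk => lt_of_le_of_ne ?_ fun h => hl ⟨k, h.symm⟩
    exact not_lt.1 fun h => not_lt.2 hk ((Fin.lt_iff_lt_card_filter_lt hQ k l).1 h)
  simpa [det_submatrix_insertNth_eq_twistorCoord] using hZ _ hq

theorem neg_one_pow_mul_twistorCoord_col_pos_of_even (hZ : MinorsPos Z) {Q : Fin m → Fin n}
    (hQ : StrictMono Q) {l : Fin n} (hl : l ∉ Set.range Q) {e : ℕ}
    (he : Even (#{k | Q k < l} + e)) :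
    0 < (-1) ^ e * twistorCoord Z Q (Zᵀ l) := by
  have hmod : e % 2 = #{k | Q k < l} % 2 := by
    have := Nat.even_add.1 he
    grind
  rw [neg_one_pow_eq_pow_mod_two, hmod, ← neg_one_pow_eq_pow_mod_two]
  exact neg_one_pow_mul_twistorCoord_col_pos hZ hQ hl

theorem mul_neg_one_pow_mul_twistorCoord_col_nonneg (hZ : MinorsPos Z) {Q : Fin m → Fin n}
    (hQ : StrictMono Q) {u : Fin n → ℝ} (hu : 0 ≤ u) {e : ℕ}
    (hpar : ∀ l ∉ Set.range Q, u l ≠ 0 → Even (#{k | Q k < l} + e)) (l : Fin n) :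
    0 ≤ u l * ((-1) ^ e * twistorCoord Z Q (Zᵀ l)) := by
  by_cases hl : l ∈ Set.range Q
  · simp [twistorCoord_col_of_mem_range Z hl]
  by_cases hul : u l = 0
  · simp [hul]
  exact mul_nonneg (hu l) (neg_one_pow_mul_twistorCoord_col_pos_of_even hZ hQ hl (hpar l hl hul)).le

theorem neg_one_pow_mul_twistorCoord_mulVec_nonneg (hZ : MinorsPos Z) {Q : Fin m → Fin n}
    (hQ : StrictMono Q) {u : Fin n → ℝ} (hu : 0 ≤ u) {e : ℕ}
    (hpar : ∀ l ∉ Set.range Q, u l ≠ 0 → Even (#{k | Q k < l} + e)) :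
    0 ≤ (-1) ^ e * twistorCoord Z Q (Z *ᵥ u) := by
  rw [twistorCoord_mulVec, mul_sum]
  refine sum_nonneg fun l _ => ?_
  rw [mul_left_comm]
  exact mul_neg_one_pow_mul_twistorCoord_col_nonneg hZ hQ hu hpar l

theorem neg_one_pow_mul_twistorCoord_mulVec_pos (hZ : MinorsPos Z) {Q : Fin m → Fin n}
    (hQ : StrictMono Q) {u : Fin n → ℝ} (hu : 0 ≤ u) {e : ℕ}
    (hpar : ∀ l ∉ Set.range Q, u l ≠ 0 → Even (#{k | Q k < l} + e))
    {l₀ : Fin n} (hl₀ : l₀ ∉ Set.range Q) (hul₀ : u l₀ ≠ 0) :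
    0 < (-1) ^ e * twistorCoord Z Q (Z *ᵥ u) := by
  rw [twistorCoord_mulVec, mul_sum]
  simp_rw [mul_left_comm ((-1 : ℝ) ^ e)]
  exact sum_pos' (fun l _ => mul_neg_one_pow_mul_twistorCoord_col_nonneg hZ hQ hu hpar l)
    ⟨l₀, mem_univ _, mul_pos (lt_of_le_of_ne (hu l₀) (Ne.symm hul₀))
      (neg_one_pow_mul_twistorCoord_col_pos_of_even hZ hQ hl₀ (hpar l₀ hl₀ hul₀))⟩

theorem mulVec_ne_smul_mulVec_of_parity (hZ : MinorsPos Z) {Q : Fin m → Fin n}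
    (hQ : StrictMono Q) {u u' : Fin n → ℝ} (hu : 0 ≤ u) (hu' : 0 ≤ u')
    (hpar : ∀ l ∉ Set.range Q, u l ≠ 0 → Even #{k | Q k < l})
    (hpar' : ∀ l ∉ Set.range Q, u' l ≠ 0 → Odd #{k | Q k < l})
    {l₀ : Fin n} (hl₀ : l₀ ∉ Set.range Q) (hul₀ : u l₀ ≠ 0) {c : ℝ} (hc : 0 < c) :
    Z *ᵥ u' ≠ c • Z *ᵥ u := by
  intro h
  have hpos := neg_one_pow_mul_twistorCoord_mulVec_pos hZ hQ hu (e := 0) (by simpa using hpar)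
    hl₀ hul₀
  have hnonpos := neg_one_pow_mul_twistorCoord_mulVec_nonneg hZ hQ hu' (e := 1)
    fun l hl hul => (hpar' l hl hul).add_one
  rw [h, map_smul, smul_eq_mul] at hnonpos
  rw [pow_zero, one_mul] at hpos
  nlinarith

theorem eq_zero_of_mulVec_eq_zero_of_forall_notMem_range (hZ : MinorsPos Z)
    {f : Fin (m + 1) → Fin n} (hf : StrictMono f) {w : Fin n → ℝ} (hw : Z *ᵥ w = 0)
    (hsupp : ∀ l ∉ Set.range f, w l = 0) : w = 0 := by
  have hsub : Z.submatrix id f *ᵥ (w ∘ f) = 0 := by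
    rw [← hw]
    ext s
    exact Fintype.sum_of_injective f hf.injective _ _ (fun l hl => by simp [hsupp l hl])
      fun _ => rfl
  have hwf := eq_zero_of_mulVec_eq_zero (hZ f hf).ne' hsub
  funext l
  by_cases hl : l ∈ Set.range f
  · obtain ⟨k, rfl⟩ := hl
    exact congrFun hwf k
  · exact hsupp l hl

end Twistor

namespace K1BCFWShape

variable {n i j i' j' : ℕ} {v v' : Fin n → ℝ}

theorem pos (hv : K1BCFWShape n i j v) {l : Fin n}
    (hl : (l : ℕ) = i ∨ (l : ℕ) = i + 1 ∨ (l : ℕ) = j ∨ (l : ℕ) = j + 1 ∨ (l : ℕ) = n - 1) :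
    0 < v l :=
  hv.2.2.1 l hl

theorem mem_of_ne_zero (hv : K1BCFWShape n i j v) {l : Fin n} (hl : v l ≠ 0) :
    (l : ℕ) = i ∨ (l : ℕ) = i + 1 ∨ (l : ℕ) = j ∨ (l : ℕ) = j + 1 ∨ (l : ℕ) = n - 1 := by
  by_contra h
  simp only [not_or] at h
  exact hl (hv.2.2.2 l h.1 h.2.1 h.2.2.1 h.2.2.2.1 h.2.2.2.2)

theorem nonneg (hv : K1BCFWShape n i j v) : 0 ≤ v := fun l => by
  by_cases hl : v l = 0
  · exact hl.ge
  · exact (hv.pos (hv.mem_of_ne_zero hl)).le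

variable {Z : Matrix (Fin 5) (Fin n) ℝ}

theorem twistorCoord_castLE_mulVec_pos (hZ : MinorsPos Z) (hv : K1BCFWShape n i j v)
    (h4 : 4 ≤ n) : 0 < twistorCoord Z (Fin.castLE h4) (Z *ᵥ v) := by
  obtain ⟨hij, hjn, -, -⟩ := id hv
  have hfar : ∀ l ∉ Set.range (Fin.castLE h4), #{k | Fin.castLE h4 k < l} = 4 := by
    intro l hl
    have hl4 : 4 ≤ (l : ℕ) := not_lt.1 fun h => hl ⟨⟨l, h⟩, rfl⟩
    rw [filter_true_of_mem fun k _ => Fin.lt_def.2 (k.isLt.trans_le hl4), card_univ,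
      Fintype.card_fin]
  simpa using neg_one_pow_mul_twistorCoord_mulVec_pos hZ (Fin.strictMono_castLE h4) hv.nonneg
    (e := 0) (fun l hl _ => by rw [hfar l hl]; decide) (l₀ := ⟨n - 1, by omega⟩)
    (fun ⟨k, hk⟩ => by simp only [Fin.ext_iff, Fin.val_castLE] at hk; omega) (hv.pos (by simp)).ne'

theorem mulVec_ne_smul_of_lt (hZ : MinorsPos Z) (hv : K1BCFWShape n i j v)
    (hv' : K1BCFWShape n i' j' v') (hi : i < i') {c : ℝ} (hc : 0 < c) :
    Z *ᵥ v' ≠ c • Z *ᵥ v := by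
  obtain ⟨hij, hjn, -, -⟩ := id hv
  obtain ⟨hij', hjn', -, -⟩ := id hv'
  refine mulVec_ne_smul_mulVec_of_parity hZ
    (Q := ![⟨i + 1, by omega⟩, ⟨j, by omega⟩, ⟨j + 1, by omega⟩, ⟨n - 1, by omega⟩])
    (by simp [Fin.lt_def]; omega) hv.nonneg hv'.nonneg ?_ ?_ (l₀ := ⟨i, by omega⟩)
    (by simp [Fin.ext_iff]; omega) (hv.pos (by simp)).ne' hc
  · intro l hl hvl
    have := hv.mem_of_ne_zero hvl
    simp only [range_cons, range_empty, Set.union_empty, Set.union_singleton, Set.union_insert,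
      Set.mem_insert_iff, Set.mem_singleton_iff, Fin.ext_iff, not_or] at hl
    rw [card_filter, Fin.sum_univ_four]
    simp only [Matrix.cons_val, Fin.lt_def, Nat.even_iff]
    split_ifs <;> omega
  · intro l hl hvl
    have := hv'.mem_of_ne_zero hvl
    simp only [range_cons, range_empty, Set.union_empty, Set.union_singleton, Set.union_insert,
      Set.mem_insert_iff, Set.mem_singleton_iff, Fin.ext_iff, not_or] at hl
    rw [card_filter, Fin.sum_univ_four]
    simp only [Matrix.cons_val, Fin.lt_def, Nat.odd_iff]
    split_ifs <;> omega

theorem mulVec_ne_smul_of_eq_of_lt (hZ : MinorsPos Z) (hv : K1BCFWShape n i j v)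
    (hv' : K1BCFWShape n i j' v') (hj : j < j') {c : ℝ} (hc : 0 < c) :
    Z *ᵥ v' ≠ c • Z *ᵥ v := by
  obtain ⟨hij, hjn, -, -⟩ := id hv
  obtain ⟨hij', hjn', -, -⟩ := id hv'
  refine mulVec_ne_smul_mulVec_of_parity hZ
    (Q := ![⟨i, by omega⟩, ⟨i + 1, by omega⟩, ⟨j + 1, by omega⟩, ⟨n - 1, by omega⟩])
    (by simp [Fin.lt_def]; omega) hv.nonneg hv'.nonneg ?_ ?_ (l₀ := ⟨j, by omega⟩)
    (by simp [Fin.ext_iff]; omega) (hv.pos (by simp)).ne' hc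
  · intro l hl hvl
    have := hv.mem_of_ne_zero hvl
    simp only [range_cons, range_empty, Set.union_empty, Set.union_singleton, Set.union_insert,
      Set.mem_insert_iff, Set.mem_singleton_iff, Fin.ext_iff, not_or] at hl
    rw [card_filter, Fin.sum_univ_four]
    simp only [Matrix.cons_val, Fin.lt_def, Nat.even_iff]
    split_ifs <;> omega
  · intro l hl hvl
    have := hv'.mem_of_ne_zero hvl
    simp only [range_cons, range_empty, Set.union_empty, Set.union_singleton, Set.union_insert,
      Set.mem_insert_iff, Set.mem_singleton_iff, Fin.ext_iff, not_or] at hl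
    rw [card_filter, Fin.sum_univ_four]
    simp only [Matrix.cons_val, Fin.lt_def, Nat.odd_iff]
    split_ifs <;> omega

theorem pos_of_mulVec_eq_smul (hZ : MinorsPos Z) (hv : K1BCFWShape n i j v)
    (hv' : K1BCFWShape n i' j' v') {c : ℝ} (h : Z *ᵥ v' = c • Z *ᵥ v) : 0 < c := by
  obtain ⟨hij, hjn, -, -⟩ := id hv
  have hpos := hv.twistorCoord_castLE_mulVec_pos hZ (show 4 ≤ n by omega)
  have hpos' := hv'.twistorCoord_castLE_mulVec_pos hZ (show 4 ≤ n by omega)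
  rw [h, map_smul, smul_eq_mul] at hpos'
  exact pos_of_mul_pos_left hpos' hpos.le

theorem eq_of_mulVec_eq_smul (hZ : MinorsPos Z) (hv : K1BCFWShape n i j v)
    (hv' : K1BCFWShape n i' j' v') {c : ℝ} (hc : 0 < c) (h : Z *ᵥ v' = c • Z *ᵥ v) :
    i = i' ∧ j = j' := by
  wlog hlt : i < i' ∨ i = i' ∧ j < j' generalizing i j i' j' v v' c
  · by_contra hne
    have hsymm : Z *ᵥ v = c⁻¹ • Z *ᵥ v' := by rw [h, smul_smul, inv_mul_cancel₀ hc.ne', one_smul]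
    have := this hv' hv (inv_pos.2 hc) hsymm (by omega)
    omega
  rcases hlt with hi | ⟨rfl, hj⟩
  · exact absurd h (mulVec_ne_smul_of_lt hZ hv hv' hi hc)
  · exact absurd h (mulVec_ne_smul_of_eq_of_lt hZ hv hv' hj hc)

theorem eq_smul_of_mulVec_eq_smul (hZ : MinorsPos Z) (hv : K1BCFWShape n i j v)
    (hv' : K1BCFWShape n i j v') {c : ℝ} (h : Z *ᵥ v' = c • Z *ᵥ v) : v' = c • v := by
  obtain ⟨hij, hjn, -, -⟩ := id hv
  refine sub_eq_zero.1 <| eq_zero_of_mulVec_eq_zero_of_forall_notMem_range hZ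
    (f := ![⟨i, by omega⟩, ⟨i + 1, by omega⟩, ⟨j, by omega⟩, ⟨j + 1, by omega⟩, ⟨n - 1, by omega⟩])
    (by simp [Fin.lt_def]; omega) (by rw [mulVec_sub, mulVec_smul, h, sub_self]) fun l hl => ?_
  simp only [range_cons, range_empty, Set.union_empty, Set.union_singleton, Set.union_insert,
    Set.mem_insert_iff, Set.mem_singleton_iff, Fin.ext_iff, not_or] at hl
  have hvl : v l = 0 := by_contra fun h0 => by have := hv.mem_of_ne_zero h0; omega
  have hvl' : v' l = 0 := by_contra fun h0 => by have := hv'.mem_of_ne_zero h0; omega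
  simp [hvl, hvl']

end K1BCFWShape

theorem k1_bcfw_disjointness_general (n : ℕ)
    (Z : Matrix (Fin 5) (Fin n) ℝ) (hZ : MinorsPos Z)
    (v v' : Fin n → ℝ) (i j i' j' : ℕ)
    (hv : K1BCFWShape n i j v) (hv' : K1BCFWShape n i' j' v')
    (h : Submodule.span ℝ {Z.mulVec v} = Submodule.span ℝ {Z.mulVec v'}) :
    Submodule.span ℝ {v} = Submodule.span ℝ {v'} := by
  obtain ⟨c, hc⟩ := Submodule.mem_span_singleton.1 (h ▸ Submodule.mem_span_singleton_self (Z *ᵥ v'))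
  have hc0 := hv.pos_of_mulVec_eq_smul hZ hv' hc.symm
  obtain ⟨rfl, rfl⟩ := hv.eq_of_mulVec_eq_smul hZ hv' hc0 hc.symm
  rw [hv.eq_smul_of_mulVec_eq_smul hZ hv' hc.symm, Submodule.span_singleton_smul_eq hc0.ne'.isUnit]

/-- Proposition 8.2: disjointness of the images of the `(1,n)`-BCFW cells in the
`m = 4` amplituhedron. If `v, v'` have the `(1,n)`-BCFW shape and `Zv`, `Zv'` span
the same line in `ℝ^5`, then `v` and `v'` span the same line in `ℝ^n`. -/
theorem k1_bcfw_disjointness (n : ℕ) (hn : 5 ≤ n)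
    (Z : Matrix (Fin 5) (Fin n) ℝ) (hZ : MinorsPos Z)
    (v v' : Fin n → ℝ) (i j i' j' : ℕ)
    (hv : K1BCFWShape n i j v) (hv' : K1BCFWShape n i' j' v')
    (h : Submodule.span ℝ {Z.mulVec v} = Submodule.span ℝ {Z.mulVec v'}) :
    Submodule.span ℝ {v} = Submodule.span ℝ {v'} :=
  k1_bcfw_disjointness_general n Z hZ v v' i j i' j' hv hv' h
end

section
/- Let m ≥ 2 be even, n ≥ m + 1, and let Z be a totally positive (1+m)×n real matrix. Suppose v ∈ ℝ^n is such that for some integers i_1, …, i_{m/2} with 1 ≤ i_1, i_r + 1 < i_{r+1} for all 1 ≤ r < m/2, and i_{m/2} ≤ n − 2, the coordinates v_{i_1}, v_{i_1+1}, v_{i_2}, v_{i_2+1}, …, v_{i_{m/2}}, v_{i_{m/2}+1}, v_n are all positive and all other coordinates of v are zero; suppose v′ ∈ ℝ^n has the same form for integers i′_1, …, i′_{m/2}. If Zv and Zv′ span the same line in ℝ^{1+m}, then v and v′ span the same line in ℝ^n. -/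
/-- The vector `v ∈ ℝ^n` has the `k = 1` shape for even `m` determined by the
`m2 = m/2` 0-based indices `idx 0, …, idx (m2-1)` satisfying `idx r + 1 < idx (r+1)`
and `idx r ≤ n - 3`: the coordinates at positions `idx r`, `idx r + 1` (for all `r`)
and at the last position `n - 1` are positive, and all other coordinates vanish.
(In the paper's 1-based notation: `1 ≤ i_1`, `i_r + 1 < i_{r+1}`, `i_{m/2} ≤ n - 2`,
and the positive coordinates are `v_{i_r}, v_{i_r + 1}` and `v_n`.) -/
def K1GenShape (n m2 : ℕ) (idx : Fin m2 → ℕ) (v : Fin n → ℝ) : Prop :=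
  (∀ r s : Fin m2, (s : ℕ) = (r : ℕ) + 1 → idx r + 1 < idx s) ∧
  (∀ r, idx r + 3 ≤ n) ∧
  (∀ l : Fin n, ((∃ r, (l : ℕ) = idx r ∨ (l : ℕ) = idx r + 1) ∨ (l : ℕ) = n - 1) →
      0 < v l) ∧
  (∀ l : Fin n, (∀ r, (l : ℕ) ≠ idx r ∧ (l : ℕ) ≠ idx r + 1) → (l : ℕ) ≠ n - 1 →
      v l = 0)


open Finset



/-- Lemma A: a kernel vector supported on ≤ 1+m columns is zero. -/
lemma kernel_small_support {m n : ℕ} (Z : Matrix (Fin (1 + m)) (Fin n) ℝ)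
    (hZ : ∀ f : Fin (1+m) → Fin n, StrictMono f → 0 < (Z.submatrix id f).det)
    (T : Finset (Fin n)) (hT : T.card = 1 + m)
    (w : Fin n → ℝ) (hw : Z.mulVec w = 0) (hsupp : ∀ l, w l ≠ 0 → l ∈ T) :
    w = 0 := by
  classical
  set f := T.orderEmbOfFin hT with hf
  have hdet : 0 < (Z.submatrix id f).det := hZ f f.strictMono
  have himg : Finset.image f Finset.univ = T := by
    apply Finset.eq_of_subset_of_card_le
    · intro x hx
      simp only [Finset.mem_image] at hx
      obtain ⟨j, _, rfl⟩ := hx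
      exact T.orderEmbOfFin_mem hT j
    · rw [Finset.card_image_of_injective _ f.injective]
      simp [hT]
  have hker : (Z.submatrix id f).mulVec (w ∘ f) = 0 := by
    funext i
    have h1 : ∑ j, Z i (f j) * w (f j) = ∑ l ∈ T, Z i l * w l := by
      rw [← himg, Finset.sum_image (fun a _ b _ h => f.injective h)]
    have h2 : ∑ l ∈ T, Z i l * w l = ∑ l, Z i l * w l := by
      apply Finset.sum_subset (Finset.subset_univ T)
      intro x _ hx
      have : w x = 0 := by by_contra hne; exact hx (hsupp x hne)
      simp [this]
    have h3 : (Z.mulVec w) i = 0 := by rw [hw]; rfl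
    simp only [Matrix.mulVec, dotProduct, Matrix.submatrix_apply, id_eq,
      Function.comp_apply, Pi.zero_apply] at h3 ⊢
    rw [h1, h2]; exact h3
  have hz : w ∘ f = 0 := Matrix.eq_zero_of_mulVec_eq_zero hdet.ne' hker
  funext l
  by_contra hne
  have hl : l ∈ T := hsupp l hne
  rw [← himg, Finset.mem_image] at hl
  obtain ⟨j, _, rfl⟩ := hl
  exact hne (congrFun hz j)



/-- Lemma B: no nonzero kernel vector admits a monotone partition into `1+m`
sign-coherent blocks each containing a nonzero coordinate. -/
lemma no_blocks {m n : ℕ} (Z : Matrix (Fin (1 + m)) (Fin n) ℝ)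
    (hZ : ∀ f : Fin (1+m) → Fin n, StrictMono f → 0 < (Z.submatrix id f).det)
    (w : Fin n → ℝ) (hw : Z.mulVec w = 0)
    (β : Fin n → Fin (1 + m)) (hβ : Monotone β) (ε : Fin (1 + m) → ℝ)
    (hε : ∀ j, ε j = 1 ∨ ε j = -1) (hcoh : ∀ l, 0 ≤ ε (β l) * w l)
    (hne : ∀ j, ∃ l, β l = j ∧ w l ≠ 0) : False := by
  classical
  set u : Fin n → ℝ := fun l => ε (β l) * w l with hu
  have hεsq : ∀ j, ε j * ε j = 1 := by
    intro j; rcases hε j with h | h <;> rw [h] <;> ring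
  have hwu : ∀ l, w l = ε (β l) * u l := by
    intro l
    show w l = ε (β l) * (ε (β l) * w l)
    rw [← mul_assoc, hεsq, one_mul]
  set s : Fin (1 + m) → Finset (Fin n) := fun j => univ.filter (fun l => β l = j) with hs
  set M : Matrix (Fin (1 + m)) (Fin (1 + m)) ℝ :=
    Matrix.of (fun j i => ∑ l ∈ s j, u l * Z i l) with hM
  -- strict monotonicity of selections
  have hsel : ∀ r : Fin (1 + m) → Fin n, (∀ j, β (r j) = j) → StrictMono r := by
    intro r hr j1 j2 hlt
    by_contra hcon
    push_neg at hcon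
    have := hβ hcon
    rw [hr j1, hr j2] at this
    exact absurd hlt (not_lt_of_ge this)
  -- determinant positivity
  have hdet : 0 < M.det := by
    have hMrow : (M : Fin (1+m) → Fin (1+m) → ℝ)
        = fun j => ∑ l ∈ s j, u l • (fun i => Z i l) := by
      funext j i
      simp only [hM, Matrix.of_apply, Finset.sum_apply, Pi.smul_apply, smul_eq_mul]
    set f := (Matrix.detRowAlternating : (Fin (1+m) → ℝ) [⋀^Fin (1+m)]→ₗ[ℝ] ℝ) with hfdef
    have key := MultilinearMap.map_sum_finset f.toMultilinearMap
      (fun (_ : Fin (1+m)) (l : Fin n) => u l • (fun i => Z i l)) s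
    have hexp : M.det = ∑ r ∈ Fintype.piFinset s,
        (∏ j, u (r j)) * (Z.submatrix id r).det := by
      have hMd : M.det = f.toMultilinearMap M := rfl
      rw [hMd, hMrow, key]
      apply Finset.sum_congr rfl
      intro r _
      have h1 := MultilinearMap.map_smul_univ f.toMultilinearMap
        (fun j => u (r j)) (fun j => (fun i : Fin (1+m) => Z i (r j)))
      rw [h1, smul_eq_mul]
      congr 1
      have h2 : (fun j => (fun i : Fin (1+m) => Z i (r j)))
          = Matrix.transpose (Z.submatrix id r) := by
        funext j i
        simp [Matrix.transpose, Matrix.submatrix]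
      show f.toMultilinearMap _ = _
      rw [h2]
      have h3 : f.toMultilinearMap (Matrix.transpose (Z.submatrix id r))
          = (Matrix.transpose (Z.submatrix id r)).det := rfl
      rw [h3, Matrix.det_transpose]
    rw [hexp]
    have hterm : ∀ r ∈ Fintype.piFinset s, 0 ≤ (∏ j, u (r j)) * (Z.submatrix id r).det := by
      intro r hr
      rw [Fintype.mem_piFinset] at hr
      have hrβ : ∀ j, β (r j) = j := by
        intro j; have := hr j; simp only [hs, Finset.mem_filter] at this; exact this.2
      have hpos := hZ r (hsel r hrβ)
      have hprod : 0 ≤ ∏ j, u (r j) := Finset.prod_nonneg (fun j _ => hcoh (r j))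
      exact mul_nonneg hprod hpos.le
    choose l0 hl0 hl0w using hne
    have hmem : l0 ∈ Fintype.piFinset s := by
      rw [Fintype.mem_piFinset]
      intro j; simp only [hs, Finset.mem_filter]; exact ⟨Finset.mem_univ _, hl0 j⟩
    have hterm0 : 0 < (∏ j, u (l0 j)) * (Z.submatrix id l0).det := by
      have hpos := hZ l0 (hsel l0 hl0)
      have hprod : 0 < ∏ j, u (l0 j) := by
        apply Finset.prod_pos
        intro j _
        rcases lt_or_eq_of_le (hcoh (l0 j)) with h | h
        · exact h
        · exfalso
          apply hl0w j
          rw [hwu (l0 j)]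
          show ε (β (l0 j)) * (ε (β (l0 j)) * w (l0 j)) = 0
          rw [← h, mul_zero]
      exact mul_pos hprod hpos
    exact Finset.sum_pos' hterm ⟨l0, hmem, hterm0⟩
  -- kernel relation
  have hker : Matrix.vecMul ε M = 0 := by
    funext i
    show ∑ j, ε j * M j i = 0
    have h1 : ∀ j, ε j * M j i = ∑ l ∈ s j, ε (β l) * (u l * Z i l) := by
      intro j
      rw [hM]
      show ε j * ∑ l ∈ s j, u l * Z i l = _
      rw [Finset.mul_sum]
      apply Finset.sum_congr rfl
      intro l hl
      simp only [hs, Finset.mem_filter] at hl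
      rw [hl.2]
    simp_rw [h1]
    rw [Finset.sum_fiberwise univ β (fun l => ε (β l) * (u l * Z i l))]
    have h2 : ∀ l, ε (β l) * (u l * Z i l) = Z i l * w l := by
      intro l
      rw [hwu l]
      ring
    simp_rw [h2]
    have h3 : (Z.mulVec w) i = 0 := by rw [hw]; rfl
    simpa [Matrix.mulVec, dotProduct] using h3
  have hε0 : ε = 0 := Matrix.eq_zero_of_vecMul_eq_zero hdet.ne' hker
  haveI : NeZero (1 + m) := ⟨by omega⟩
  rcases hε 0 with h | h <;> rw [hε0] at h <;> simp at h



/-- Lemma: a kernel vector with at least `1+m` support elements whose sign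
changes are confined to a set `C` of at most `1+m` positions cannot exist. -/
lemma no_sparse_changes {m n : ℕ} (Z : Matrix (Fin (1 + m)) (Fin n) ℝ)
    (hZ : ∀ f : Fin (1+m) → Fin n, StrictMono f → 0 < (Z.submatrix id f).det)
    (w : Fin n → ℝ) (hw : Z.mulVec w = 0)
    (C : Finset (Fin n)) (hCsupp : ∀ q ∈ C, w q ≠ 0) (hCcard : C.card ≤ 1 + m)
    (hmin : ∀ l, w l ≠ 0 → (∀ x, x < l → w x = 0) → l ∈ C)
    (hchg : ∀ p q : Fin n, w p ≠ 0 → w q ≠ 0 → p < q → (∀ x, p < x → x < q → w x = 0) →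
        w p * w q < 0 → q ∈ C)
    (hbig : 1 + m ≤ (univ.filter (fun l => w l ≠ 0)).card) : False := by
  classical
  set Sp := univ.filter (fun l : Fin n => w l ≠ 0) with hSp
  have hmemSp : ∀ l, l ∈ Sp ↔ w l ≠ 0 := by
    intro l; simp [hSp]
  have hCSp : C ⊆ Sp := fun q hq => (hmemSp q).mpr (hCsupp q hq)
  obtain ⟨E, hCE, hESp, hEcard⟩ := Finset.exists_subsuperset_card_eq hCSp hCcard hbig
  set p := E.orderEmbOfFin hEcard with hp
  have hpE : ∀ j, p j ∈ E := fun j => E.orderEmbOfFin_mem hEcard j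
  have hEp : ∀ e ∈ E, ∃ j, p j = e := by
    intro e he
    have := E.range_orderEmbOfFin hEcard
    have he2 : e ∈ Set.range (p : Fin (1+m) → Fin n) := by rw [this]; exact he
    exact he2
  have hEsupp : ∀ e ∈ E, w e ≠ 0 := fun e he => (hmemSp e).mp (hESp he)
  -- the block function β
  set Jset : Fin n → Finset (Fin (1+m)) := fun l => univ.filter (fun j => p j ≤ l) with hJ
  have hmemJ : ∀ l j, j ∈ Jset l ↔ p j ≤ l := by intro l j; simp [hJ]
  set β : Fin n → Fin (1+m) := fun l =>
    if h : (Jset l).Nonempty then (Jset l).max' h else ⟨0, by omega⟩ with hβdef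
  have hβspec : ∀ l (h : (Jset l).Nonempty), β l = (Jset l).max' h := by
    intro l h; rw [hβdef]; simp only [dif_pos h]
  have hβmono : Monotone β := by
    intro l1 l2 h12
    by_cases h1 : (Jset l1).Nonempty
    · have hsub : Jset l1 ⊆ Jset l2 := by
        intro j hj
        rw [hmemJ] at hj ⊢
        exact le_trans hj h12
      have h2 : (Jset l2).Nonempty := h1.mono hsub
      rw [hβspec l1 h1, hβspec l2 h2]
      exact Finset.max'_subset h1 hsub
    · rw [hβdef]; simp only [dif_neg h1]
      simp [Fin.le_def]
  have hβp : ∀ j, β (p j) = j := by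
    intro j
    have hne1 : (Jset (p j)).Nonempty := ⟨j, (hmemJ _ _).mpr le_rfl⟩
    rw [hβspec _ hne1]
    apply le_antisymm
    · apply Finset.max'_le
      intro i hi
      rw [hmemJ] at hi
      exact p.le_iff_le.mp hi
    · exact Finset.le_max' _ j ((hmemJ _ _).mpr le_rfl)
  -- Sp is nonempty, its min lies in E
  have hSpne : Sp.Nonempty := by
    rw [← Finset.card_pos]; omega
  set l0 := Sp.min' hSpne with hl0
  have hl0Sp : l0 ∈ Sp := Sp.min'_mem hSpne
  have hl0E : l0 ∈ E := by
    apply hCE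
    apply hmin l0 ((hmemSp l0).mp hl0Sp)
    intro x hx
    by_contra hxne
    have : l0 ≤ x := Sp.min'_le x ((hmemSp x).mpr hxne)
    exact absurd hx (not_lt_of_ge this)
  obtain ⟨j0, hj0⟩ := hEp l0 hl0E
  -- for support elements, Jset is nonempty
  have hJne : ∀ l, w l ≠ 0 → (Jset l).Nonempty := by
    intro l hl
    refine ⟨j0, (hmemJ _ _).mpr ?_⟩
    rw [hj0]
    exact Sp.min'_le l ((hmemSp l).mpr hl)
  -- p (β l) is the largest element of E that is ≤ l
  have hPle : ∀ l (h : (Jset l).Nonempty), p (β l) ≤ l := by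
    intro l h
    rw [hβspec l h]
    have := (Jset l).max'_mem h
    rwa [hmemJ] at this
  have hPmax : ∀ l (h : (Jset l).Nonempty), ∀ e ∈ E, e ≤ l → e ≤ p (β l) := by
    intro l h e he hel
    obtain ⟨j, rfl⟩ := hEp e he
    rw [hβspec l h]
    exact p.le_iff_le.mpr (Finset.le_max' _ j ((hmemJ _ _).mpr hel))
  -- the main induction: on the support, w l has the same sign as w (p (β l))
  have hclaim : ∀ k : ℕ, ∀ l : Fin n, (l : ℕ) ≤ k → w l ≠ 0 → 0 < w l * w (p (β l)) := by
    intro k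
    induction k with
    | zero =>
      intro l hlk hlw
      have hlE : l ∈ E := by
        apply hCE
        apply hmin l hlw
        intro x hx
        exfalso
        have := Fin.lt_def.mp hx
        omega
      obtain ⟨j, rfl⟩ := hEp l hlE
      rw [hβp j]
      exact mul_self_pos.mpr hlw
    | succ k ih =>
      intro l hlk hlw
      by_cases hlE : l ∈ E
      · obtain ⟨j, rfl⟩ := hEp l hlE
        rw [hβp j]
        exact mul_self_pos.mpr hlw
      · have hJl : (Jset l).Nonempty := hJne l hlw
        -- l is not the minimum of the support
        have hxlt : ∃ x, x < l ∧ w x ≠ 0 := by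
          by_contra hcon
          push_neg at hcon
          exact hlE (hCE (hmin l hlw hcon))
        obtain ⟨x0, hx0l, hx0w⟩ := hxlt
        have hSplne : (Sp.filter (· < l)).Nonempty :=
          ⟨x0, Finset.mem_filter.mpr ⟨(hmemSp x0).mpr hx0w, hx0l⟩⟩
        set lm := (Sp.filter (· < l)).max' hSplne with hlm
        have hlmmem := (Sp.filter (· < l)).max'_mem hSplne
        rw [Finset.mem_filter] at hlmmem
        have hlmSp : lm ∈ Sp := hlmmem.1
        have hlmlt : lm < l := hlmmem.2
        have hlmw : w lm ≠ 0 := (hmemSp lm).mp hlmSp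
        have hlmmax : ∀ x, x < l → w x ≠ 0 → x ≤ lm := by
          intro x hx hxw
          rw [hlm]
          exact Finset.le_max' (Sp.filter (· < l)) x (Finset.mem_filter.mpr ⟨(hmemSp x).mpr hxw, hx⟩)
        have hbetween : ∀ x, lm < x → x < l → w x = 0 := by
          intro x h1 h2
          by_contra hxw
          exact absurd h1 (not_lt_of_ge (hlmmax x h2 hxw))
        -- no sign change between lm and l
        have hsign : 0 < w lm * w l := by
          rcases lt_trichotomy (w lm * w l) 0 with hneg | hzero | hpos
          · exfalso
            exact hlE (hCE (hchg lm l hlmw hlw hlmlt hbetween hneg))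
          · exact absurd hzero (mul_ne_zero hlmw hlw)
          · exact hpos
        -- Jset l = Jset lm
        have hJeq : Jset l = Jset lm := by
          ext j
          rw [hmemJ, hmemJ]
          constructor
          · intro hjl
            rcases lt_or_eq_of_le hjl with hlt | heq
            · exact hlmmax _ hlt (hEsupp _ (hpE j))
            · exact absurd (heq ▸ hpE j) hlE
          · intro hjlm
            exact le_of_lt (lt_of_le_of_lt hjlm hlmlt)
        have hJlmne : (Jset lm).Nonempty := hJeq ▸ hJl
        have hβeq : β l = β lm := by
          rw [hβspec l hJl, hβspec lm hJlmne]
          simp only [hJeq]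
        have hlmk : (lm : ℕ) ≤ k := by
          have h1 := Fin.lt_def.mp hlmlt
          omega
        have hih := ih lm hlmk hlmw
        rw [hβeq]
        nlinarith [mul_pos hsign hih, mul_self_pos.mpr hlmw]
  -- assemble the data for `no_blocks`
  set ε : Fin (1+m) → ℝ := fun j => if 0 < w (p j) then 1 else -1 with hεdef
  have hεpm : ∀ j, ε j = 1 ∨ ε j = -1 := by
    intro j; rw [hεdef]; dsimp only; split_ifs <;> simp
  have hcoh : ∀ l, 0 ≤ ε (β l) * w l := by
    intro l
    by_cases hwl : w l = 0
    · simp [hwl]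
    · have hcl := hclaim n l (le_of_lt l.isLt) hwl
      have hXw : w (p (β l)) ≠ 0 := hEsupp _ (hpE _)
      rw [hεdef]; dsimp only
      split_ifs with hX
      · nlinarith
      · have hXneg : w (p (β l)) < 0 := lt_of_le_of_ne (not_lt.mp hX) hXw
        nlinarith
  exact no_blocks Z hZ w hw β hβmono ε hεpm hcoh
    (fun j => ⟨p j, hβp j, hEsupp _ (hpE j)⟩)

/-- vectors of the given shape are nonnegative -/
lemma shape_nonneg {n m2 : ℕ} {idx : Fin m2 → ℕ} {v : Fin n → ℝ}
    (hv : K1GenShape n m2 idx v) : ∀ l, 0 ≤ v l := by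
  intro l
  by_cases hc : ((∃ r, (l : ℕ) = idx r ∨ (l : ℕ) = idx r + 1) ∨ (l : ℕ) = n - 1)
  · exact (hv.2.2.1 l hc).le
  · push_neg at hc
    obtain ⟨h1, h2⟩ := hc
    exact le_of_eq (hv.2.2.2 l h1 h2).symm

/-- a set of positions contained in `m2` pairs of adjacent positions, no two of
which are adjacent, has at most `m2` elements. -/
lemma pair_card_bound {n m2 : ℕ} (hm2 : 0 < m2) (a : Fin m2 → ℕ) (D : Finset (Fin n))
    (hD : ∀ q ∈ D, ∃ r, (q : ℕ) = a r ∨ (q : ℕ) = a r + 1)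
    (hadj : ∀ q1 q2 : Fin n, q1 ∈ D → q2 ∈ D → (q2 : ℕ) = (q1 : ℕ) + 1 → False) :
    D.card ≤ m2 := by
  classical
  have hmain : D.card ≤ (univ : Finset (Fin m2)).card := by
    refine Finset.card_le_card_of_injOn (t := (univ : Finset (Fin m2)))
      (fun q : Fin n => if h : ∃ r, (q : ℕ) = a r ∨ (q : ℕ) = a r + 1 then h.choose else ⟨0, hm2⟩)
      (fun x _ => Finset.mem_univ _) ?_
    intro q1 hq1 q2 hq2 heq
    have h1 := hD q1 (Finset.mem_coe.mp hq1)
    have h2 := hD q2 (Finset.mem_coe.mp hq2)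
    simp only [dif_pos h1, dif_pos h2] at heq
    have s1 := h1.choose_spec
    have s2 := h2.choose_spec
    rw [heq] at s1
    by_contra hne
    have hvne : (q1 : ℕ) ≠ (q2 : ℕ) := fun hv => hne (Fin.ext hv)
    rcases s1 with e1 | e1 <;> rcases s2 with e2 | e2
    · omega
    · exact hadj q1 q2 (Finset.mem_coe.mp hq1) (Finset.mem_coe.mp hq2) (by omega)
    · exact hadj q2 q1 (Finset.mem_coe.mp hq2) (Finset.mem_coe.mp hq1) (by omega)
    · omega
  simpa using hmain


/-- Even-`m` case of the Remark following Proposition 8.2: for a totally positive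
`(1+m) × n` matrix `Z` and vectors `v, v'` of the above shape, if `Zv` and `Zv'`
span the same line in `ℝ^{1+m}`, then `v` and `v'` span the same line in `ℝ^n`. -/
theorem k1_even_m_disjointness (m n : ℕ) (hm : 2 ≤ m) (hmeven : 2 ∣ m)
    (hn : m + 1 ≤ n)
    (Z : Matrix (Fin (1 + m)) (Fin n) ℝ) (hZ : MinorsPos Z)
    (v v' : Fin n → ℝ) (idx idx' : Fin (m / 2) → ℕ)
    (hv : K1GenShape n (m / 2) idx v) (hv' : K1GenShape n (m / 2) idx' v')
    (h : Submodule.span ℝ {Z.mulVec v} = Submodule.span ℝ {Z.mulVec v'}) :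
    Submodule.span ℝ {v} = Submodule.span ℝ {v'} := by
  classical
  have hm2pos : 0 < m / 2 := by omega
  have hm2sum : m / 2 + m / 2 = m := by omega
  obtain ⟨llast, hllast⟩ : ∃ llast : Fin n, (llast : ℕ) = n - 1 := ⟨⟨n - 1, by omega⟩, rfl⟩
  have hv'last : 0 < v' llast := hv'.2.2.1 llast (Or.inr hllast)
  have hZ' : ∀ f : Fin (1+m) → Fin n, StrictMono f → 0 < (Z.submatrix id f).det := hZ
  have h1 : Z.mulVec v' ∈ Submodule.span ℝ {Z.mulVec v} := by
    rw [h]; exact Submodule.mem_span_singleton_self _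
  obtain ⟨c, hc⟩ := Submodule.mem_span_singleton.mp h1
  set w : Fin n → ℝ := fun l => v' l - c * v l with hwdef
  have hwker : Z.mulVec w = 0 := by
    have hw2 : w = v' - c • v := by funext l; simp [hwdef]
    rw [hw2, Matrix.mulVec_sub, Matrix.mulVec_smul, hc, sub_self]
  by_cases hw0 : w = 0
  · have hveq : v' = c • v := by
      funext l
      have h3 := congrFun hw0 l
      simp only [hwdef, Pi.zero_apply] at h3
      have : v' l = c * v l := by linarith
      simpa using this
    have hcne : c ≠ 0 := by
      intro h0
      rw [h0] at hveq
      have h4 : v' llast = 0 := by rw [hveq]; simp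
      exact absurd h4 (ne_of_gt hv'last)
    rw [hveq]
    exact (Submodule.span_singleton_smul_eq (IsUnit.mk0 c hcne) v).symm
  · exfalso
    set Sp := univ.filter (fun l : Fin n => w l ≠ 0) with hSp
    have hbig : 1 + m ≤ Sp.card := by
      by_contra hcon
      push_neg at hcon
      obtain ⟨T, hsubT, _, hTcard⟩ := Finset.exists_subsuperset_card_eq
        (Finset.subset_univ Sp) (le_of_lt hcon) (by simp; omega)
      exact hw0 (kernel_small_support Z hZ' T hTcard w hwker
        (fun l hl => hsubT (by simp [hSp, hl])))
    set C := Sp.filter (fun q : Fin n => (∀ x, x < q → w x = 0) ∨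
      ∃ p, w p ≠ 0 ∧ p < q ∧ (∀ x, p < x → x < q → w x = 0) ∧ w p * w q < 0) with hC
    have hCsupp : ∀ q ∈ C, w q ≠ 0 := by
      intro q hq
      have := (Finset.mem_filter.mp hq).1
      rw [hSp, Finset.mem_filter] at this
      exact this.2
    have hminC : ∀ l, w l ≠ 0 → (∀ x, x < l → w x = 0) → l ∈ C := by
      intro l hlw hmin
      rw [hC, Finset.mem_filter]
      exact ⟨by rw [hSp, Finset.mem_filter]; exact ⟨Finset.mem_univ _, hlw⟩, Or.inl hmin⟩
    have hchgC : ∀ p q : Fin n, w p ≠ 0 → w q ≠ 0 → p < q →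
        (∀ x, p < x → x < q → w x = 0) → w p * w q < 0 → q ∈ C := by
      intro p q hpw hqw hpq hbet hsgn
      rw [hC, Finset.mem_filter]
      exact ⟨by rw [hSp, Finset.mem_filter]; exact ⟨Finset.mem_univ _, hqw⟩,
        Or.inr ⟨p, hpw, hpq, hbet, hsgn⟩⟩
    -- adjacency helper
    have hadjC : ∀ q1 q2 : Fin n, q1 ∈ C → q2 ∈ C → (q2 : ℕ) = (q1 : ℕ) + 1 →
        0 < w q1 * w q2 → False := by
      intro q1 q2 hq1 hq2 hsucc hprod
      have hq1w : w q1 ≠ 0 := hCsupp q1 hq1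
      have hq2w : w q2 ≠ 0 := hCsupp q2 hq2
      rcases (Finset.mem_filter.mp hq2).2 with hmin2 | ⟨p, hpw, hplt, hbet, hsgn⟩
      · exact hq1w (hmin2 q1 (by rw [Fin.lt_def]; omega))
      · have hple : (p : ℕ) < (q2 : ℕ) := Fin.lt_def.mp hplt
        rcases (by omega : (p : ℕ) = (q1 : ℕ) ∨ (p : ℕ) < (q1 : ℕ)) with he | hlt2
        · have hpe : p = q1 := Fin.ext he
          rw [hpe] at hsgn
          nlinarith
        · exact hq1w (hbet q1 (by rw [Fin.lt_def]; omega) (by rw [Fin.lt_def]; omega))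
    -- splitting C by sign and last position
    set Cneg := C.filter (fun q : Fin n => w q < 0 ∧ (q : ℕ) ≠ n - 1) with hCneg
    set Cpos := C.filter (fun q : Fin n => 0 < w q ∧ (q : ℕ) ≠ n - 1) with hCpos
    set Clast := C.filter (fun q : Fin n => (q : ℕ) = n - 1) with hClast
    have hcover : C ⊆ (Cneg ∪ Cpos) ∪ Clast := by
      intro q hq
      have hqw : w q ≠ 0 := hCsupp q hq
      by_cases hl : (q : ℕ) = n - 1
      · exact Finset.mem_union_right _ (Finset.mem_filter.mpr ⟨hq, hl⟩)
      · rcases lt_or_gt_of_ne hqw with hneg | hpos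
        · exact Finset.mem_union_left _
            (Finset.mem_union_left _ (Finset.mem_filter.mpr ⟨hq, hneg, hl⟩))
        · exact Finset.mem_union_left _
            (Finset.mem_union_right _ (Finset.mem_filter.mpr ⟨hq, hpos, hl⟩))
    have hClast1 : Clast.card ≤ 1 := by
      rw [Finset.card_le_one]
      intro a ha b hb
      have ha' := (Finset.mem_filter.mp ha).2
      have hb' := (Finset.mem_filter.mp hb).2
      exact Fin.ext (by omega)
    -- negative positions lie in the idx pairs
    have hCnegD : ∀ q ∈ Cneg, ∃ r, (q : ℕ) = idx r ∨ (q : ℕ) = idx r + 1 := by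
      intro q hq
      obtain ⟨hqC, hqneg, hqlast⟩ := Finset.mem_filter.mp hq
      have hvq : v q ≠ 0 := by
        intro h0
        have : w q = v' q := by rw [hwdef]; simp [h0]
        have := shape_nonneg hv' q
        nlinarith
      by_contra hcon
      push_neg at hcon
      exact hvq (hv.2.2.2 q (fun r => ⟨fun he => (hcon r).1 he, fun he => (hcon r).2 he⟩) hqlast)
    have hCnegcard : Cneg.card ≤ m / 2 := by
      apply pair_card_bound hm2pos idx Cneg hCnegD
      intro q1 q2 hq1 hq2 hsucc
      have h1 := (Finset.mem_filter.mp hq1)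
      have h2 := (Finset.mem_filter.mp hq2)
      exact hadjC q1 q2 h1.1 h2.1 hsucc (mul_pos_of_neg_of_neg h1.2.1 h2.2.1)
    have hCposcard : Cpos.card ≤ m / 2 := by
      rcases le_or_gt c 0 with hcle | hcpos
      · -- w is everywhere nonnegative: at most one element of C at all
        have hwnn : ∀ l, 0 ≤ w l := by
          intro l
          have hv1 := shape_nonneg hv l
          have hv2 := shape_nonneg hv' l
          rw [hwdef]
          dsimp only
          nlinarith
        have : Cpos.card ≤ 1 := by
          rw [Finset.card_le_one]
          intro a ha b hb
          have haC := (Finset.mem_filter.mp ha).1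
          have hbC := (Finset.mem_filter.mp hb).1
          have hminonly : ∀ q ∈ C, ∀ x, x < q → w x = 0 := by
            intro q hq
            rcases (Finset.mem_filter.mp hq).2 with hmin2 | ⟨p, hpw, _, _, hsgn⟩
            · exact hmin2
            · exfalso
              have := hwnn p
              have hq' := hwnn q
              nlinarith
          by_contra hne
          rcases lt_trichotomy a b with hab | hab | hab
          · exact hCsupp a haC (hminonly b hbC a hab)
          · exact hne hab
          · exact hCsupp b hbC (hminonly a haC b hab)
        omega
      · -- c > 0 : positive positions lie in the idx' pairs
        apply pair_card_bound hm2pos idx' Cpos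
        · intro q hq
          obtain ⟨hqC, hqpos, hqlast⟩ := Finset.mem_filter.mp hq
          have hvq : v' q ≠ 0 := by
            intro h0
            have hwq : w q = -(c * v q) := by rw [hwdef]; simp [h0]
            have := shape_nonneg hv q
            nlinarith
          by_contra hcon
          push_neg at hcon
          exact hvq (hv'.2.2.2 q
            (fun r => ⟨fun he => (hcon r).1 he, fun he => (hcon r).2 he⟩) hqlast)
        · intro q1 q2 hq1 hq2 hsucc
          have h1 := (Finset.mem_filter.mp hq1)
          have h2 := (Finset.mem_filter.mp hq2)
          exact hadjC q1 q2 h1.1 h2.1 hsucc (mul_pos h1.2.1 h2.2.1)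
    have hCcard : C.card ≤ 1 + m := by
      have h5 := Finset.card_le_card hcover
      have h6 := Finset.card_union_le (Cneg ∪ Cpos) Clast
      have h7 := Finset.card_union_le Cneg Cpos
      omega
    exact no_sparse_changes Z hZ' w hwker C hCsupp hCcard hminC hchgC hbig
end

section
/- Let D be a finite multiset of dominoes in ℝ^n, let v be the sum of the elements of D, and let I ⊆ {1, …, n}. Then v alternates in sign on I if and only if there exists an I-alternating domino sequence for v with respect to D. Moreover, in any I-alternating domino sequence for v with respect to D, the indices of the dominoes are weakly increasing, and each index occurs at most twice. -/
/-- All entries nonnegative (a nonzero domino satisfying this is positive). -/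
def NonnegVec {n : ℕ} (d : Fin n → ℝ) : Prop := ∀ j, 0 ≤ d j

/-- All entries nonpositive (a nonzero domino satisfying this is negative). -/
def NonposVec {n : ℕ} (d : Fin n → ℝ) : Prop := ∀ j, d j ≤ 0

/-- Two dominoes have opposite signs. -/
def OppSign {n : ℕ} (d e : Fin n → ℝ) : Prop :=
  (NonnegVec d ∧ NonposVec e) ∨ (NonposVec d ∧ NonnegVec e)

/-- `v` alternates in sign on `I`: all entries of `v` indexed by `I` are nonzero
and consecutive ones (in increasing order of index) have opposite signs. -/
def AlternatesOn {n : ℕ} (v : Fin n → ℝ) (I : Finset (Fin n)) : Prop :=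
  (∀ i ∈ I, v i ≠ 0) ∧
  ∀ (j : ℕ) (h1 : j < I.card) (h2 : j + 1 < I.card),
    v (I.orderEmbOfFin rfl ⟨j, h1⟩) * v (I.orderEmbOfFin rfl ⟨j + 1, h2⟩) < 0

/-- `L` is an `I`-alternating domino sequence for `v` with respect to the multiset
`D`: it is a sequence of distinct nonzero dominoes of `D` (i.e. a sub-multiset of
`D`), of length `|I|`, whose `j`-th element is nonzero at the `j`-th element of `I`
with the same sign as `v` there, and whose signs alternate. -/
def IsAltDominoSeq {n : ℕ} (D : Multiset (Fin n → ℝ)) (v : Fin n → ℝ)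
    (I : Finset (Fin n)) (L : List (Fin n → ℝ)) : Prop :=
  L.length = I.card ∧
  (↑L : Multiset (Fin n → ℝ)) ≤ D ∧
  (∀ d ∈ L, IsDomino d) ∧
  (∀ (j : ℕ) (hj : j < L.length) (hj' : j < I.card),
    0 < v (I.orderEmbOfFin rfl ⟨j, hj'⟩) *
        L.get ⟨j, hj⟩ (I.orderEmbOfFin rfl ⟨j, hj'⟩)) ∧
  (∀ (j : ℕ) (h1 : j < L.length) (h2 : j + 1 < L.length),
    OppSign (L.get ⟨j, h1⟩) (L.get ⟨j + 1, h2⟩))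

lemma domino_support {n : ℕ} {a : Fin n} {d : Fin n → ℝ} (h : IsDominoAt a d)
    {j : Fin n} (hj : d j ≠ 0) : (j : ℕ) = a ∨ (j : ℕ) = (a : ℕ) + 1 := by
  unfold IsDominoAt at h
  split_ifs at h with hcase
  · by_contra hc
    push_neg at hc
    exact hj (h.2 j hc.1 hc.2)
  · left
    by_contra hc
    exact hj (h.2 j (fun he => hc (by rw [he])))

lemma domino_nonzero_at {n : ℕ} {a : Fin n} {d : Fin n → ℝ} (h : IsDominoAt a d) :
    d a ≠ 0 := by
  unfold IsDominoAt at h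
  split_ifs at h with hcase
  · intro h0; rw [h0, zero_mul] at h; exact lt_irrefl 0 h.1
  · exact h.1

lemma domino_sign {n : ℕ} {a : Fin n} {d : Fin n → ℝ} (h : IsDominoAt a d) :
    NonnegVec d ∨ NonposVec d := by
  unfold IsDominoAt at h
  split_ifs at h with hcase
  · rcases mul_pos_iff.1 h.1 with ⟨h1, h2⟩ | ⟨h1, h2⟩
    · left
      intro j
      by_cases hj1 : (j : ℕ) = (a : ℕ)
      · rw [show j = a from Fin.ext hj1]; exact le_of_lt h1
      by_cases hj2 : (j : ℕ) = (a : ℕ) + 1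
      · rw [show j = ⟨(a : ℕ) + 1, hcase⟩ from Fin.ext hj2]; exact le_of_lt h2
      · rw [h.2 j hj1 hj2]
    · right
      intro j
      by_cases hj1 : (j : ℕ) = (a : ℕ)
      · rw [show j = a from Fin.ext hj1]; exact le_of_lt h1
      by_cases hj2 : (j : ℕ) = (a : ℕ) + 1
      · rw [show j = ⟨(a : ℕ) + 1, hcase⟩ from Fin.ext hj2]; exact le_of_lt h2
      · rw [h.2 j hj1 hj2]
  · rcases lt_or_gt_of_ne h.1 with h1 | h1
    · right
      intro j
      by_cases hj : j = a
      · rw [hj]; exact le_of_lt h1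
      · rw [h.2 j hj]
    · left
      intro j
      by_cases hj : j = a
      · rw [hj]; exact le_of_lt h1
      · rw [h.2 j hj]

lemma domino_nonneg_of_pos {n : ℕ} {d : Fin n → ℝ} (h : IsDomino d)
    {j : Fin n} (hj : 0 < d j) : NonnegVec d := by
  obtain ⟨a, ha⟩ := h
  rcases domino_sign ha with hs | hs
  · exact hs
  · exact absurd (hs j) (not_le.2 hj)

lemma domino_nonpos_of_neg {n : ℕ} {d : Fin n → ℝ} (h : IsDomino d)
    {j : Fin n} (hj : d j < 0) : NonposVec d := by
  obtain ⟨a, ha⟩ := h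
  rcases domino_sign ha with hs | hs
  · exact absurd (hs j) (not_le.2 hj)
  · exact hs

lemma domino_index_unique {n : ℕ} {a a' : Fin n} {d : Fin n → ℝ}
    (h : IsDominoAt a d) (h' : IsDominoAt a' d) : a = a' := by
  have h1 := domino_support h' (domino_nonzero_at h)
  have h2 := domino_support h (domino_nonzero_at h')
  apply Fin.ext
  omega

lemma multiset_sum_apply {n : ℕ} (D : Multiset (Fin n → ℝ)) (i : Fin n) :
    D.sum i = (D.map (fun d => d i)).sum := by
  induction D using Multiset.induction with
  | empty => simp
  | cons a s ih => simp [ih]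

lemma exists_domino_pos {n : ℕ} (D : Multiset (Fin n → ℝ)) (v : Fin n → ℝ)
    (hv : v = D.sum) {i : Fin n} (hi : v i ≠ 0) :
    ∃ d ∈ D, 0 < v i * d i := by
  by_contra hc
  push_neg at hc
  have h1 : 0 < v i * v i := mul_self_pos.2 hi
  have h2 : v i * v i = (D.map (fun d => v i * d i)).sum := by
    rw [Multiset.sum_map_mul_left]
    congr 1
    rw [hv, multiset_sum_apply]
  have h3 : (D.map (fun d => v i * d i)).sum ≤ 0 := by
    have h4 := Multiset.sum_nonneg (s := (D.map (fun d => v i * d i)).map (fun x => -x))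
      (by simpa using fun d hd => hc d hd)
    rw [Multiset.sum_map_neg'] at h4
    linarith
  rw [h2] at h1
  linarith

/-- Lemma 10.3: `v` alternates in sign on `I` iff it has an `I`-alternating domino
sequence; moreover in any such sequence the indices of the dominoes are weakly
increasing and each index occurs at most twice. -/
theorem alternating_domino_sequence (n : ℕ) (D : Multiset (Fin n → ℝ))
    (hD : ∀ d ∈ D, d = 0 ∨ IsDomino d)
    (v : Fin n → ℝ) (hv : v = D.sum) (I : Finset (Fin n)) :
    (AlternatesOn v I ↔ ∃ L : List (Fin n → ℝ), IsAltDominoSeq D v I L) ∧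
    (∀ L : List (Fin n → ℝ), IsAltDominoSeq D v I L →
      (∀ (j j' : ℕ) (hj : j < L.length) (hj' : j' < L.length), j ≤ j' →
        ∀ a a' : Fin n, IsDominoAt a (L.get ⟨j, hj⟩) →
          IsDominoAt a' (L.get ⟨j', hj'⟩) → a ≤ a') ∧
      (∀ (j1 j2 j3 : ℕ) (h1 : j1 < L.length) (h2 : j2 < L.length)
          (h3 : j3 < L.length), j1 < j2 → j2 < j3 →
        ∀ a : Fin n, IsDominoAt a (L.get ⟨j1, h1⟩) → IsDominoAt a (L.get ⟨j2, h2⟩) →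
          IsDominoAt a (L.get ⟨j3, h3⟩) → False)) := by
  have emono : ∀ (x y : Fin I.card), x < y →
      ((I.orderEmbOfFin rfl x : Fin n) : ℕ) < ((I.orderEmbOfFin rfl y : Fin n) : ℕ) := by
    intro x y hxy
    exact (I.orderEmbOfFin rfl).strictMono hxy
  constructor
  · constructor
    · -- forward direction: construct the sequence
      rintro ⟨hA1, hA2⟩
      have hex : ∀ j : Fin I.card, ∃ d, d ∈ D ∧
          0 < v (I.orderEmbOfFin rfl j) * d (I.orderEmbOfFin rfl j) := by
        intro j
        exact exists_domino_pos D v hv (hA1 _ (I.orderEmbOfFin_mem rfl j))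
      choose f hfD hfpos using hex
      have hdom : ∀ j, IsDomino (f j) := by
        intro j
        rcases hD _ (hfD j) with h0 | h
        · exfalso
          have := hfpos j
          rw [h0] at this
          simp at this
        · exact h
      have hsign : ∀ j : Fin I.card,
          (0 < v (I.orderEmbOfFin rfl j) ∧ NonnegVec (f j)) ∨
          (v (I.orderEmbOfFin rfl j) < 0 ∧ NonposVec (f j)) := by
        intro j
        rcases mul_pos_iff.1 (hfpos j) with ⟨h1, h2⟩ | ⟨h1, h2⟩
        · exact Or.inl ⟨h1, domino_nonneg_of_pos (hdom j) h2⟩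
        · exact Or.inr ⟨h1, domino_nonpos_of_neg (hdom j) h2⟩
      have key : ∀ j j' : Fin I.card, j < j' → f j = f j' → False := by
        intro j j' hlt heq
        obtain ⟨a, ha⟩ := hdom j
        have hj0 : f j (I.orderEmbOfFin rfl j) ≠ 0 := by
          intro h0
          have := hfpos j
          rw [h0, mul_zero] at this
          exact lt_irrefl 0 this
        have hj'0 : f j (I.orderEmbOfFin rfl j') ≠ 0 := by
          intro h0
          have := hfpos j'
          rw [← heq, h0, mul_zero] at this
          exact lt_irrefl 0 this
        have s1 := domino_support ha hj0
        have s2 := domino_support ha hj'0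
        have hm := emono j j' hlt
        have hcons : (j' : ℕ) = (j : ℕ) + 1 := by
          by_contra hne
          have hlt2 : (j : ℕ) + 1 < (j' : ℕ) := by
            have := hlt
            rw [Fin.lt_def] at this
            omega
          have hmidlt : (j : ℕ) + 1 < I.card := lt_trans hlt2 j'.isLt
          have hm1 := emono j ⟨(j : ℕ) + 1, hmidlt⟩ (by rw [Fin.lt_def]; simp)
          have hm2 := emono ⟨(j : ℕ) + 1, hmidlt⟩ j' (by rw [Fin.lt_def]; simpa)
          omega
        have hj1lt : (j : ℕ) + 1 < I.card := by rw [← hcons]; exact j'.isLt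
        have halt := hA2 (j : ℕ) j.isLt hj1lt
        have hej : (⟨(j : ℕ), j.isLt⟩ : Fin I.card) = j := by ext; rfl
        have hej' : (⟨(j : ℕ) + 1, hj1lt⟩ : Fin I.card) = j' := Fin.ext hcons.symm
        rw [hej, hej'] at halt
        rcases hsign j with ⟨hv1, hs1⟩ | ⟨hv1, hs1⟩ <;>
          rcases hsign j' with ⟨hv2, hs2⟩ | ⟨hv2, hs2⟩
        · nlinarith
        · -- f j nonneg, f j' nonpos, but f j = f j' nonzero at e j
          have := hs2 (I.orderEmbOfFin rfl j)
          rw [← heq] at this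
          have := hs1 (I.orderEmbOfFin rfl j)
          rcases lt_or_eq_of_le (hs1 (I.orderEmbOfFin rfl j)) with hgt | heq0
          · have := hs2 (I.orderEmbOfFin rfl j)
            rw [← heq] at this
            linarith
          · exact hj0 heq0.symm
        · rcases lt_or_eq_of_le (hs1 (I.orderEmbOfFin rfl j)) with hgt | heq0
          · have := hs2 (I.orderEmbOfFin rfl j)
            rw [← heq] at this
            linarith
          · exact hj0 heq0
        · nlinarith
      have hinj : Function.Injective f := by
        intro j j' heq
        rcases lt_trichotomy j j' with h | h | h
        · exact absurd heq (fun he => key j j' h he)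
        · exact h
        · exact absurd heq (fun he => key j' j h he.symm)
      refine ⟨List.ofFn f, ?_, ?_, ?_, ?_, ?_⟩
      · simp
      · have hnd : (↑(List.ofFn f) : Multiset (Fin n → ℝ)).Nodup := by
          rw [Multiset.coe_nodup, List.nodup_ofFn]
          exact hinj
        rw [Multiset.le_iff_subset hnd]
        intro x hx
        rw [Multiset.mem_coe, List.mem_ofFn] at hx
        obtain ⟨j, rfl⟩ := hx
        exact hfD j
      · intro d hd
        rw [List.mem_ofFn] at hd
        obtain ⟨j, rfl⟩ := hd
        exact hdom j
      · intro j hj hj'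
        simp only [List.get_ofFn, Fin.cast_mk]
        have := hfpos ⟨j, by simpa using hj'⟩
        convert this using 3
      · intro j h1 h2
        simp only [List.get_ofFn, Fin.cast_mk]
        have h1' : j < I.card := by simpa using h1
        have h2' : j + 1 < I.card := by simpa using h2
        have halt := hA2 j h1' h2'
        rcases hsign ⟨j, by simpa using h1⟩ with ⟨hv1, hs1⟩ | ⟨hv1, hs1⟩ <;>
          rcases hsign ⟨j + 1, by simpa using h2⟩ with ⟨hv2, hs2⟩ | ⟨hv2, hs2⟩
        · exfalso; nlinarith
        · exact Or.inl ⟨hs1, hs2⟩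
        · exact Or.inr ⟨hs1, hs2⟩
        · exfalso; nlinarith
    · -- reverse direction
      rintro ⟨L, hlen, hle, hdomL, hpos, halt⟩
      constructor
      · intro i hi
        have : i ∈ Set.range (I.orderEmbOfFin rfl) := by
          rw [Finset.range_orderEmbOfFin]
          exact hi
        obtain ⟨j, rfl⟩ := this
        have hjL : (j : ℕ) < L.length := by rw [hlen]; exact j.isLt
        have := hpos (j : ℕ) hjL j.isLt
        have hej : (⟨(j : ℕ), j.isLt⟩ : Fin I.card) = j := by ext; rfl
        rw [hej] at this
        intro h0
        rw [h0, zero_mul] at this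
        exact lt_irrefl 0 this
      · intro j h1 h2
        have h1L : j < L.length := by rw [hlen]; exact h1
        have h2L : j + 1 < L.length := by rw [hlen]; exact h2
        have hp1 := hpos j h1L h1
        have hp2 := hpos (j + 1) h2L h2
        rcases halt j h1L h2L with ⟨hs1, hs2⟩ | ⟨hs1, hs2⟩
        · have hv1 : 0 < v (I.orderEmbOfFin rfl ⟨j, h1⟩) := by
            have := hs1 (I.orderEmbOfFin rfl ⟨j, h1⟩)
            nlinarith
          have hv2 : v (I.orderEmbOfFin rfl ⟨j + 1, h2⟩) < 0 := by
            have := hs2 (I.orderEmbOfFin rfl ⟨j + 1, h2⟩)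
            nlinarith
          exact mul_neg_of_pos_of_neg hv1 hv2
        · have hv1 : v (I.orderEmbOfFin rfl ⟨j, h1⟩) < 0 := by
            have := hs1 (I.orderEmbOfFin rfl ⟨j, h1⟩)
            nlinarith
          have hv2 : 0 < v (I.orderEmbOfFin rfl ⟨j + 1, h2⟩) := by
            have := hs2 (I.orderEmbOfFin rfl ⟨j + 1, h2⟩)
            nlinarith
          exact mul_neg_of_neg_of_pos hv1 hv2
  · -- second part: indices increasing, each at most twice
    rintro L ⟨hlen, hle, hdomL, hpos, halt⟩
    have hne : ∀ (j : ℕ) (hj : j < L.length),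
        L.get ⟨j, hj⟩ (I.orderEmbOfFin rfl ⟨j, hlen ▸ hj⟩) ≠ 0 := by
      intro j hj h0
      have := hpos j hj (hlen ▸ hj)
      rw [h0, mul_zero] at this
      exact lt_irrefl 0 this
    constructor
    · intro j j' hj hj' hjle a a' ha ha'
      rcases eq_or_lt_of_le hjle with rfl | hlt
      · exact le_of_eq (domino_index_unique ha ha')
      · have s1 := domino_support ha (hne j hj)
        have s2 := domino_support ha' (hne j' hj')
        have hm := emono ⟨j, hlen ▸ hj⟩ ⟨j', hlen ▸ hj'⟩ (by rw [Fin.lt_def]; simpa)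
        rw [Fin.le_def]
        omega
    · intro j1 j2 j3 h1 h2 h3 h12 h23 a ha1 ha2 ha3
      have s1 := domino_support ha1 (hne j1 h1)
      have s2 := domino_support ha2 (hne j2 h2)
      have s3 := domino_support ha3 (hne j3 h3)
      have hm1 := emono ⟨j1, hlen ▸ h1⟩ ⟨j2, hlen ▸ h2⟩ (by rw [Fin.lt_def]; simpa)
      have hm2 := emono ⟨j2, hlen ▸ h2⟩ ⟨j3, hlen ▸ h3⟩ (by rw [Fin.lt_def]; simpa)
      omega
end

section
/- Let v ∈ ℝ^n and let d ∈ ℝ^n be a domino. Then var(v + d) ≤ var(v) + 2. -/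
/-!
Only the two entries at the domino's positions change. After deleting zeros, the sign
variation of a list is a sum over adjacent pairs. Deleting a nonzero entry `b` never increases
it, since a sign change between `a` and `c` is also one between `a` and `b` or between `b`
and `c`. Inserting a block of at most two entries replaces one adjacent pair `a, b` by at most
three, `a, x, y, b`, and three sign changes along them force one between `a` and `b`, so the
count grows by at most two.
-/

noncomputable def signChange (a b : ℝ) : ℕ := if a * b < 0 then 1 else 0

lemma signChangesList_cons_cons (a b : ℝ) (t : List ℝ) :
    signChangesList (a :: b :: t) = signChange a b + signChangesList (b :: t) := rfl

lemma signChange_le_one (a b : ℝ) : signChange a b ≤ 1 := by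
  unfold signChange; split_ifs <;> omega

lemma signChange_le_add {b : ℝ} (hb : b ≠ 0) (a c : ℝ) :
    signChange a c ≤ signChange a b + signChange b c := by
  unfold signChange
  split_ifs with hac hab hbc hbc <;> try omega
  nlinarith [mul_nonneg (not_lt.mp hab) (not_lt.mp hbc),
    mul_neg_of_neg_of_pos hac (sq_pos_of_ne_zero hb)]

lemma signChange_add_add_le (a x y b : ℝ) :
    signChange a x + signChange x y + signChange y b ≤ signChange a b + 2 := by
  unfold signChange
  split_ifs with hax hxy hyb hab <;> try omega
  nlinarith [mul_pos_of_neg_of_neg hax hyb, mul_nonneg (not_lt.mp hab) (sq_nonneg (x * y))]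

lemma signChangesList_cons_le (a : ℝ) (L : List ℝ) :
    signChangesList (a :: L) ≤ signChangesList L + 1 := by
  cases L with
  | nil => simp [signChangesList]
  | cons b t => rw [signChangesList_cons_cons]; linarith [signChange_le_one a b]

lemma signChangesList_le_cons (a : ℝ) (L : List ℝ) :
    signChangesList L ≤ signChangesList (a :: L) := by
  cases L with
  | nil => simp [signChangesList]
  | cons b t => rw [signChangesList_cons_cons]; omega

/-- The sign changes strictly inside the prefix `A` are common to both sides. -/
lemma signChangesList_append_le_of_forall_cons {M N B : List ℝ} {c : ℕ}
    (h₀ : signChangesList (M ++ B) ≤ signChangesList (N ++ B) + c)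
    (h₁ : ∀ a, signChangesList (a :: (M ++ B)) ≤ signChangesList (a :: (N ++ B)) + c) :
    ∀ A : List ℝ, signChangesList (A ++ M ++ B) ≤ signChangesList (A ++ N ++ B) + c
  | [] => by simpa using h₀
  | [a] => by simpa using h₁ a
  | a :: a' :: A => by
    have ih := signChangesList_append_le_of_forall_cons h₀ h₁ (a' :: A)
    simp only [List.cons_append] at ih ⊢
    rw [signChangesList_cons_cons, signChangesList_cons_cons]
    omega

lemma signChangesList_append_le_append_cons {x : ℝ} (hx : x ≠ 0) (A B : List ℝ) :
    signChangesList (A ++ B) ≤ signChangesList (A ++ x :: B) := by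
  suffices h : signChangesList (A ++ [] ++ B) ≤ signChangesList (A ++ [x] ++ B) + 0 by
    simpa using h
  refine signChangesList_append_le_of_forall_cons ?_ ?_ A
  · simpa using signChangesList_le_cons x B
  · intro a
    cases B with
    | nil => simp [signChangesList]
    | cons b t =>
      simp only [List.nil_append, List.singleton_append, signChangesList_cons_cons]
      linarith [signChange_le_add hx a b]

lemma signChangesList_append_le_append_append {M : List ℝ} (hM : ∀ x ∈ M, x ≠ 0)
    (A B : List ℝ) : signChangesList (A ++ B) ≤ signChangesList (A ++ M ++ B) := by
  induction M with
  | nil => simp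
  | cons x M ih =>
    rw [List.forall_mem_cons] at hM
    calc signChangesList (A ++ B) ≤ signChangesList (A ++ M ++ B) := ih hM.2
      _ ≤ signChangesList (A ++ x :: (M ++ B)) := by
          rw [List.append_assoc]; exact signChangesList_append_le_append_cons hM.1 A _
      _ = signChangesList (A ++ x :: M ++ B) := by simp

lemma signChangesList_append_append_le {M : List ℝ} (hM : M.length ≤ 2) (A B : List ℝ) :
    signChangesList (A ++ M ++ B) ≤ signChangesList (A ++ B) + 2 := by
  suffices h : signChangesList (A ++ M ++ B) ≤ signChangesList (A ++ [] ++ B) + 2 by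
    simpa using h
  refine signChangesList_append_le_of_forall_cons ?_ ?_ A
  · rcases M with _ | ⟨x, _ | ⟨y, _ | ⟨z, M⟩⟩⟩
    · simp
    · simpa using (signChangesList_cons_le x B).trans (by omega)
    · simpa using (signChangesList_cons_le x _).trans
        (Nat.add_le_add_right (signChangesList_cons_le y B) 1)
    · simp at hM
  · intro a
    rcases M with _ | ⟨x, _ | ⟨y, _ | ⟨z, M⟩⟩⟩
    · simp
    · cases B with
      | nil =>
        show signChange a x + 0 ≤ 0 + 2
        linarith [signChange_le_one a x]
      | cons b t =>
        simp only [List.cons_append, List.nil_append, signChangesList_cons_cons]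
        linarith [signChange_le_one a x, signChange_le_one x b]
    · cases B with
      | nil =>
        show signChange a x + (signChange x y + 0) ≤ 0 + 2
        linarith [signChange_le_one a x, signChange_le_one x y]
      | cons b t =>
        simp only [List.cons_append, List.nil_append, signChangesList_cons_cons]
        linarith [signChange_add_add_le a x y b]
    · simp at hM

lemma signChangesList_filter_le_of_take_eq_of_drop_eq {L L' : List ℝ} (k : ℕ)
    (htake : L'.take k = L.take k) (hdrop : L'.drop (k + 2) = L.drop (k + 2)) :
    signChangesList (L'.filter fun x => decide (x ≠ 0)) ≤
      signChangesList (L.filter fun x => decide (x ≠ 0)) + 2 := by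
  set p : ℝ → Bool := fun x => decide (x ≠ 0)
  have hsplit (L : List ℝ) : L = L.take k ++ (L.drop k).take 2 ++ L.drop (k + 2) := by
    rw [List.append_assoc, ← List.drop_drop, List.take_append_drop, List.take_append_drop]
  have hzero (L : List ℝ) : ∀ x ∈ L.filter p, x ≠ 0 := by simp [p]
  set A := (L.take k).filter p
  set B := (L.drop (k + 2)).filter p
  calc signChangesList (L'.filter p)
      = signChangesList (A ++ ((L'.drop k).take 2).filter p ++ B) := by
        conv_lhs => rw [hsplit L']
        rw [htake, hdrop, List.filter_append, List.filter_append]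
    _ ≤ signChangesList (A ++ B) + 2 :=
        signChangesList_append_append_le ((List.length_filter_le _ _).trans (by simp)) _ _
    _ ≤ signChangesList (A ++ ((L.drop k).take 2).filter p ++ B) + 2 :=
        Nat.add_le_add_right (signChangesList_append_le_append_append (hzero _) _ _) 2
    _ = signChangesList (L.filter p) + 2 := by
        rw [← List.filter_append, ← List.filter_append, ← hsplit L]

lemma signVar_le_add_two_of_eq_off {n : ℕ} (k : ℕ) {v w : Fin n → ℝ}
    (h : ∀ j : Fin n, (j : ℕ) ≠ k → (j : ℕ) ≠ k + 1 → w j = v j) :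
    signVar w ≤ signVar v + 2 := by
  refine signChangesList_filter_le_of_take_eq_of_drop_eq k ?_ ?_
  · refine List.ext_getElem (by simp) fun m hm _ => ?_
    simp only [List.length_take, List.length_ofFn, lt_inf_iff] at hm
    simpa using h ⟨m, hm.2⟩ (by simp; omega) (by simp; omega)
  · refine List.ext_getElem (by simp) fun m hm _ => ?_
    simp only [List.length_drop, List.length_ofFn] at hm
    simpa using h ⟨k + 2 + m, by omega⟩ (by simp; omega) (by simp; omega)

lemma IsDominoAt.apply_eq_zero {n : ℕ} {i : Fin n} {d : Fin n → ℝ} (hd : IsDominoAt i d)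
    {j : Fin n} (hj : (j : ℕ) ≠ i) (hj' : (j : ℕ) ≠ i + 1) : d j = 0 := by
  unfold IsDominoAt at hd
  split_ifs at hd
  · exact hd.2 j hj hj'
  · exact hd.2 j (Fin.ne_of_val_ne hj)

/-- Lemma 10.6(i): adding a domino (possibly zero) to a vector increases its sign
variation by at most 2. -/
theorem signVar_add_domino_le (n : ℕ) (v d : Fin n → ℝ)
    (hd : d = 0 ∨ IsDomino d) :
    signVar (v + d) ≤ signVar v + 2 := by
  rcases hd with rfl | ⟨i, hi⟩
  · simp
  · exact signVar_le_add_two_of_eq_off i fun j hj hj' => by simp [hi.apply_eq_zero hj hj']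
end

section
/- Let V ⊆ ℝ^n be a 2-dimensional totally nonnegative subspace which is orthodox or deviant, with fundamental dominoes d^(1), d^(2), d^(3), d^(4), and let v ∈ V be such that dom_V(v) has no zero entries. If V is orthodox, then dom_V(v) equals ±(+,+,+,+) or ±(+,+,−,−). If V is deviant, then dom_V(v) equals ±(+,+,+,−), ±(−,+,+,+), or ±(+,+,+,+). -/
/-- A positive domino with index `i`. -/
def IsPosDominoAt {n : ℕ} (i : Fin n) (d : Fin n → ℝ) : Prop :=
  IsDominoAt i d ∧ 0 < d i

/-- `barVec v` is `v` with its last coordinate replaced by `0`. -/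
def barVec {n : ℕ} (v : Fin n → ℝ) : Fin n → ℝ :=
  fun j => if (j : ℕ) = n - 1 then 0 else v j

/-- All maximal minors of `A` are nonnegative. -/
def MinorsNonneg {k n : ℕ} (A : Matrix (Fin k) (Fin n) ℝ) : Prop :=
  ∀ f : Fin k → Fin n, StrictMono f → 0 ≤ (A.submatrix id f).det

/-- `V` is a `k`-dimensional totally nonnegative subspace of `ℝ^n`. -/
def IsTNNSubspace (k n : ℕ) (V : Submodule ℝ (Fin n → ℝ)) : Prop :=
  ∃ A : Matrix (Fin k) (Fin n) ℝ,
    LinearIndependent ℝ (fun i => A i) ∧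
    Submodule.span ℝ (Set.range fun i => A i) = V ∧
    MinorsNonneg A

/-- `V` is orthodox with standard basis vectors `d, e` and fundamental dominoes
`d1, d2, d3, d4`: the `dᵢ` are linearly independent positive dominoes with 0-based
indices `i1 + 1 < i2 ≤ i3 < i4 - 1` and `i4 ≤ n - 3` (1-based: `i_4 ≤ n - 2`),
`V = span{d, e}`, `d̄ = d1 + d2` with `d` negative in its last coordinate, and
`ē = d3 + d4` with `e` positive in its last coordinate. -/
def OrthodoxWith {n : ℕ} (V : Submodule ℝ (Fin n → ℝ))
    (d e d1 d2 d3 d4 : Fin n → ℝ) : Prop :=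
  (∃ i1 i2 i3 i4 : Fin n,
    IsPosDominoAt i1 d1 ∧ IsPosDominoAt i2 d2 ∧ IsPosDominoAt i3 d3 ∧
    IsPosDominoAt i4 d4 ∧
    (i1 : ℕ) + 1 < (i2 : ℕ) ∧ (i2 : ℕ) ≤ (i3 : ℕ) ∧ (i3 : ℕ) + 1 < (i4 : ℕ) ∧
    (i4 : ℕ) + 3 ≤ n) ∧
  LinearIndependent ℝ ![d1, d2, d3, d4] ∧
  V = Submodule.span ℝ {d, e} ∧
  barVec d = d1 + d2 ∧ (∀ j : Fin n, (j : ℕ) = n - 1 → d j < 0) ∧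
  barVec e = d3 + d4 ∧ (∀ j : Fin n, (j : ℕ) = n - 1 → 0 < e j)

/-- `V` is deviant with standard basis vectors `d, e` and fundamental dominoes
`d1, d2, d3, d4`: the `dᵢ` are linearly independent positive dominoes with 0-based
indices `i1 < i2`, `i2 + 1 < i3 ≤ i4 ≤ n - 3` (1-based: `i_4 ≤ n - 2`),
`V = span{d, e}`, `d̄ = d1 - d4` with `d` negative in its last coordinate, and
`e = d1 + d2 + d3`. -/
def DeviantWith {n : ℕ} (V : Submodule ℝ (Fin n → ℝ))
    (d e d1 d2 d3 d4 : Fin n → ℝ) : Prop :=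
  (∃ i1 i2 i3 i4 : Fin n,
    IsPosDominoAt i1 d1 ∧ IsPosDominoAt i2 d2 ∧ IsPosDominoAt i3 d3 ∧
    IsPosDominoAt i4 d4 ∧
    (i1 : ℕ) < (i2 : ℕ) ∧ (i2 : ℕ) + 1 < (i3 : ℕ) ∧ (i3 : ℕ) ≤ (i4 : ℕ) ∧
    (i4 : ℕ) + 3 ≤ n) ∧
  LinearIndependent ℝ ![d1, d2, d3, d4] ∧
  V = Submodule.span ℝ {d, e} ∧
  barVec d = d1 - d4 ∧ (∀ j : Fin n, (j : ℕ) = n - 1 → d j < 0) ∧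
  e = d1 + d2 + d3

/-- `V` is orthodox (for some choice of data). -/
def IsOrthodox {n : ℕ} (V : Submodule ℝ (Fin n → ℝ)) : Prop :=
  ∃ d e d1 d2 d3 d4 : Fin n → ℝ, OrthodoxWith V d e d1 d2 d3 d4

/-- `V` is deviant (for some choice of data). -/
def IsDeviant {n : ℕ} (V : Submodule ℝ (Fin n → ℝ)) : Prop :=
  ∃ d e d1 d2 d3 d4 : Fin n → ℝ, DeviantWith V d e d1 d2 d3 d4


lemma domino_last_zero {n : ℕ} {i : Fin n} {d : Fin n → ℝ} (hd : IsDominoAt i d)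
    (hi : (i : ℕ) + 2 < n) (j : Fin n) (hj : (j : ℕ) = n - 1) : d j = 0 := by
  unfold IsDominoAt at hd
  rw [dif_pos (by omega)] at hd
  exact hd.2 j (by omega) (by omega)

lemma barVec_smul_add {n : ℕ} (a b : ℝ) (d e : Fin n → ℝ) :
    barVec (a • d + b • e) = a • barVec d + b • barVec e := by
  funext j
  simp only [barVec, Pi.add_apply, Pi.smul_apply, smul_eq_mul]
  split <;> simp

lemma li_four_eq {n : ℕ} {d1 d2 d3 d4 : Fin n → ℝ}
    (hli : LinearIndependent ℝ ![d1, d2, d3, d4]) {a b c f a' b' c' f' : ℝ}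
    (h : a • d1 + b • d2 + c • d3 + f • d4 = a' • d1 + b' • d2 + c' • d3 + f' • d4) :
    a = a' ∧ b = b' ∧ c = c' ∧ f = f' := by
  rw [Fintype.linearIndependent_iff] at hli
  have hz : ∀ i, (![a - a', b - b', c - c', f - f'] : Fin 4 → ℝ) i = 0 := by
    apply hli
    rw [Fin.sum_univ_four]
    simp only [Matrix.cons_val_zero, Matrix.cons_val_one, Matrix.head_cons,
      Matrix.cons_val_two, Matrix.tail_cons, Matrix.cons_val_three]
    linear_combination (norm := module) h
  have h0 := hz 0; have h1 := hz 1; have h2 := hz 2; have h3 := hz 3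
  simp only [Matrix.cons_val_zero, Matrix.cons_val_one, Matrix.head_cons,
    Matrix.cons_val_two, Matrix.tail_cons, Matrix.cons_val_three, sub_eq_zero] at h0 h1 h2 h3
  exact ⟨h0, h1, h2, h3⟩


lemma forall_fin_four {P : Fin 4 → Prop} (h0 : P 0) (h1 : P 1) (h2 : P 2) (h3 : P 3) :
    ∀ i, P i := fun i => by
  fin_cases i
  exacts [h0, h1, h2, h3]

/-- Corollary 9.4: sign patterns of `dom_V(v)`. If `v ∈ V` and
`v̄ = α₀ d1 + α₁ d2 + α₂ d3 + α₃ d4` with all `αᵢ` nonzero, then: if `V` is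
orthodox (with these data) the sign vector of `α` is `±(+,+,+,+)` or `±(+,+,-,-)`;
if `V` is deviant it is `±(+,+,+,-)`, `±(-,+,+,+)` or `±(+,+,+,+)`. -/
theorem dom_sign_patterns (n : ℕ) (V : Submodule ℝ (Fin n → ℝ))
    (hV : IsTNNSubspace 2 n V)
    (d e d1 d2 d3 d4 : Fin n → ℝ)
    (v : Fin n → ℝ) (hv : v ∈ V) (α : Fin 4 → ℝ)
    (hdecomp : barVec v = α 0 • d1 + α 1 • d2 + α 2 • d3 + α 3 • d4)
    (hnz : ∀ i, α i ≠ 0) :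
    (OrthodoxWith V d e d1 d2 d3 d4 →
      ((∀ i, 0 < α i) ∨ (∀ i, α i < 0) ∨
        (0 < α 0 ∧ 0 < α 1 ∧ α 2 < 0 ∧ α 3 < 0) ∨
        (α 0 < 0 ∧ α 1 < 0 ∧ 0 < α 2 ∧ 0 < α 3))) ∧
    (DeviantWith V d e d1 d2 d3 d4 →
      ((0 < α 0 ∧ 0 < α 1 ∧ 0 < α 2 ∧ α 3 < 0) ∨
        (α 0 < 0 ∧ α 1 < 0 ∧ α 2 < 0 ∧ 0 < α 3) ∨
        (α 0 < 0 ∧ 0 < α 1 ∧ 0 < α 2 ∧ 0 < α 3) ∨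
        (0 < α 0 ∧ α 1 < 0 ∧ α 2 < 0 ∧ α 3 < 0) ∨
        (∀ i, 0 < α i) ∨ (∀ i, α i < 0))) := by
  constructor
  · rintro ⟨-, hli, hspan, hbd, -, hbe, -⟩
    rw [hspan, Submodule.mem_span_pair] at hv
    obtain ⟨a, b, hab⟩ := hv
    have hkey : α 0 • d1 + α 1 • d2 + α 2 • d3 + α 3 • d4
        = a • d1 + a • d2 + b • d3 + b • d4 := by
      rw [← hdecomp, ← hab, barVec_smul_add, hbd, hbe]
      module
    obtain ⟨h0, h1, h2, h3⟩ := li_four_eq hli hkey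
    have ha : a ≠ 0 := h0 ▸ hnz 0
    have hb : b ≠ 0 := h2 ▸ hnz 2
    rcases ha.lt_or_gt with ha' | ha' <;> rcases hb.lt_or_gt with hb' | hb'
    · exact Or.inr (Or.inl (forall_fin_four (P := fun i => α i < 0)
        (by simp only [h0]; linarith) (by simp only [h1]; linarith) (by simp only [h2]; linarith) (by simp only [h3]; linarith)))
    · exact Or.inr (Or.inr (Or.inr ⟨by linarith, by linarith, by linarith, by linarith⟩))
    · exact Or.inr (Or.inr (Or.inl ⟨by linarith, by linarith, by linarith, by linarith⟩))
    · exact Or.inl (forall_fin_four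
        (by simp only [h0]; linarith) (by simp only [h1]; linarith) (by simp only [h2]; linarith) (by simp only [h3]; linarith))
  · rintro ⟨⟨i1, i2, i3, i4, hd1, hd2, hd3, hd4, h12, h23, h34, h4n⟩, hli, hspan, hbd, -, he⟩
    rw [hspan, Submodule.mem_span_pair] at hv
    obtain ⟨a, b, hab⟩ := hv
    have hbe : barVec e = e := by
      funext j
      simp only [barVec]
      split
      · rename_i hj
        rw [he]
        simp only [Pi.add_apply]
        rw [domino_last_zero hd1.1 (by omega) j hj,
          domino_last_zero hd2.1 (by omega) j hj,
          domino_last_zero hd3.1 (by omega) j hj]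
        ring
      · rfl
    have hkey : α 0 • d1 + α 1 • d2 + α 2 • d3 + α 3 • d4
        = (a + b) • d1 + b • d2 + b • d3 + (-a) • d4 := by
      rw [← hdecomp, ← hab, barVec_smul_add, hbd, hbe, he]
      module
    obtain ⟨h0, h1, h2, h3⟩ := li_four_eq hli hkey
    have ha : a ≠ 0 := fun h => hnz 3 (by rw [h3, h, neg_zero])
    have hb : b ≠ 0 := h1 ▸ hnz 1
    have hab' : a + b ≠ 0 := h0 ▸ hnz 0
    rcases ha.lt_or_gt with ha' | ha' <;> rcases hb.lt_or_gt with hb' | hb'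
    · exact Or.inr (Or.inl ⟨by linarith, by linarith, by linarith, by linarith⟩)
    · rcases hab'.lt_or_gt with hc | hc
      · exact Or.inr (Or.inr (Or.inl ⟨by linarith, by linarith, by linarith, by linarith⟩))
      · exact Or.inr (Or.inr (Or.inr (Or.inr (Or.inl (forall_fin_four
          (by simp only [h0]; linarith) (by simp only [h1]; linarith) (by simp only [h2]; linarith) (by simp only [h3]; linarith))))))
    · rcases hab'.lt_or_gt with hc | hc
      · exact Or.inr (Or.inr (Or.inr (Or.inr (Or.inr (forall_fin_four
          (by simp only [h0]; linarith) (by simp only [h1]; linarith) (by simp only [h2]; linarith) (by simp only [h3]; linarith))))))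
      · exact Or.inr (Or.inr (Or.inr (Or.inl ⟨by linarith, by linarith, by linarith, by linarith⟩)))
    · exact Or.inl ⟨by linarith, by linarith, by linarith, by linarith⟩
end
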